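/- arXiv:1601.05943 — 6 statements merged into one kernel-verified Lean document; each statement's English description precedes it below -/
import Mathlib

section
/- Let n and k be positive integers with 0 < k < n, and let I be a k-subset of Z/nZ. Then the module L_I defined by taking U_i = F[t] at each vertex i of the circular double quiver, with x_i acting as multiplication by 1 if i ∈ I and by t otherwise, and y_i acting as multiplication by t if i ∈ I and by 1 otherwise, satisfies the defining relations x_i y_i = y_{i+1} x_{i+1} and x^k = y^{n-k} (composites of k consecutive x's equal composites of n-k consecutive y's starting at the same vertex): every composite x_{i+k}∘···∘x_{i+1} acts on U_i as multiplication by t^{#([i+1,i+k]\I)}, and the composite y_{i-(n-k)+1}∘···∘y_i acts on U_i as multiplication by the same power of t, so L_I is a well-defined B-module. -/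
open Polynomial

private lemma total_count (n : ℕ) [NeZero n] (I : Finset (ZMod n)) (c : ZMod n) :
    ((Finset.range n).filter (fun j : ℕ => c + (j : ZMod n) ∈ I)).card = I.card := by
  refine Finset.card_bij (fun j _ => c + (j : ZMod n)) ?_ ?_ ?_
  · intro a ha; exact (Finset.mem_filter.mp ha).2
  · intro a ha b hb h
    have ha' := Finset.mem_range.mp (Finset.mem_filter.mp ha).1
    have hb' := Finset.mem_range.mp (Finset.mem_filter.mp hb).1
    have h2 : (a : ZMod n) = b := add_left_cancel h
    have := congrArg ZMod.val h2
    rwa [ZMod.val_cast_of_lt ha', ZMod.val_cast_of_lt hb'] at this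
  · intro b hb
    refine ⟨(b - c).val, Finset.mem_filter.mpr ⟨Finset.mem_range.mpr (ZMod.val_lt _), ?_⟩, ?_⟩
    · simpa [ZMod.natCast_val, ZMod.cast_id] using hb
    · simp [ZMod.natCast_val, ZMod.cast_id]

private lemma exp_eq (n k : ℕ) [NeZero n] (hk : 0 < k) (hkn : k < n)
    (I : Finset (ZMod n)) (hI : I.card = k) (i : ZMod n) :
    ((Finset.range (n - k)).filter (fun j : ℕ => i - (j : ZMod n) ∈ I)).card =
      ((Finset.range k).filter (fun j : ℕ => i + 1 + (j : ZMod n) ∉ I)).card := by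
  have hn1 : 1 ≤ n := by omega
  have key : ∀ a : ℕ, a ≤ n - 1 → i + 1 + ((n - 1 - a : ℕ) : ZMod n) = i - (a : ZMod n) := by
    intro a hle
    rw [Nat.cast_sub hle, Nat.cast_sub hn1, ZMod.natCast_self]
    ring
  have hbij : ((Finset.range (n - k)).filter (fun j : ℕ => i - (j : ZMod n) ∈ I)).card =
      ((Finset.Ico k n).filter (fun j : ℕ => i + 1 + (j : ZMod n) ∈ I)).card := by
    refine Finset.card_nbij' (fun j => n - 1 - j) (fun m => n - 1 - m) ?_ ?_ ?_ ?_
    · intro a ha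
      obtain ⟨ha1, ha2⟩ := Finset.mem_filter.mp ha
      have ha1' := Finset.mem_range.mp ha1
      refine Finset.mem_filter.mpr ⟨Finset.mem_Ico.mpr ⟨show k ≤ n - 1 - a by omega, show n - 1 - a < n by omega⟩, ?_⟩
      rw [key a (by omega)]; exact ha2
    · intro b hb
      obtain ⟨hb1, hb2⟩ := Finset.mem_filter.mp hb
      obtain ⟨hbk, hbn⟩ := Finset.mem_Ico.mp hb1
      refine Finset.mem_filter.mpr ⟨Finset.mem_range.mpr (show n - 1 - b < n - k by omega), ?_⟩
      have hrec : n - 1 - (n - 1 - b) = b := by omega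
      have := key (n - 1 - b) (by omega)
      rw [hrec] at this
      rw [← this]; exact hb2
    · intro a ha
      have := Finset.mem_range.mp (Finset.mem_filter.mp ha).1
      show n - 1 - (n - 1 - a) = a
      omega
    · intro b hb
      have := Finset.mem_Ico.mp (Finset.mem_filter.mp hb).1
      show n - 1 - (n - 1 - b) = b
      omega
  rw [hbij]
  have hsplit : ((Finset.range k).filter (fun j : ℕ => i + 1 + (j : ZMod n) ∈ I)).card +
      ((Finset.Ico k n).filter (fun j : ℕ => i + 1 + (j : ZMod n) ∈ I)).card = k := by
    have h1 : Finset.range n = Finset.range k ∪ Finset.Ico k n := by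
      ext x; simp [Finset.mem_Ico]; omega
    have hdisj : Disjoint ((Finset.range k).filter (fun j : ℕ => i + 1 + (j : ZMod n) ∈ I))
        ((Finset.Ico k n).filter (fun j : ℕ => i + 1 + (j : ZMod n) ∈ I)) := by
      refine Finset.disjoint_filter_filter ?_
      simp [Finset.disjoint_left, Finset.mem_Ico]
      omega
    have := total_count n I (i + 1)
    rw [hI, h1, Finset.filter_union, Finset.card_union_of_disjoint hdisj] at this
    exact this
  have hsplit2 : ((Finset.range k).filter (fun j : ℕ => i + 1 + (j : ZMod n) ∈ I)).card +
      ((Finset.range k).filter (fun j : ℕ => i + 1 + (j : ZMod n) ∉ I)).card = k := by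
    rw [Finset.card_filter_add_card_filter_not, Finset.card_range]
  omega

/-- For a `k`-subset `I` of `ℤ/nℤ`, the assignment `U_i = F[t]`,
with `x_i` acting as multiplication by `1` if `i ∈ I` and by `t` otherwise, and `y_i`
acting as multiplication by `t` if `i ∈ I` and by `1` otherwise, satisfies the defining
relations of `B`: at every vertex `x_i y_i = y_{i+1} x_{i+1}` (all equal to
multiplication by `t`), and the composite of `k` consecutive `x`'s starting at vertex `i`
acts as multiplication by `t^{#([i+1,i+k] \ I)}`, which coincides with the action of the
composite of `n-k` consecutive `y`'s starting at the same vertex.  Hence `L_I` is a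
well-defined `B`-module. -/
theorem rank_one_module_LI_well_defined (F : Type) [Field F] (n k : ℕ) [NeZero n]
    (hk : 0 < k) (hkn : k < n) (I : Finset (ZMod n)) (hI : I.card = k)
    (xcoef ycoef : ZMod n → Polynomial F)
    (hx : ∀ i : ZMod n, xcoef i = if i ∈ I then 1 else X)
    (hy : ∀ i : ZMod n, ycoef i = if i ∈ I then X else 1) :
    (∀ i : ZMod n, xcoef i * ycoef i = xcoef (i + 1) * ycoef (i + 1)) ∧
    (∀ i : ZMod n,
      (∏ j ∈ Finset.range k, xcoef (i + 1 + (j : ZMod n))) =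
        X ^ (((Finset.range k).filter (fun j : ℕ => i + 1 + (j : ZMod n) ∉ I)).card) ∧
      (∏ j ∈ Finset.range (n - k), ycoef (i - (j : ZMod n))) =
        X ^ (((Finset.range k).filter (fun j : ℕ => i + 1 + (j : ZMod n) ∉ I)).card)) := by
  constructor
  · intro i
    rw [hx, hx, hy, hy]
    by_cases h1 : i ∈ I <;> by_cases h2 : i + 1 ∈ I <;> simp [h1, h2]
  · intro i
    constructor
    · simp only [hx]
      rw [Finset.prod_ite, Finset.prod_const_one, Finset.prod_const, one_mul]
    · simp only [hy]
      rw [Finset.prod_ite, Finset.prod_const, Finset.prod_const_one, mul_one,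
        exp_eq n k hk hkn I hI i]
end

section
/- Let n > k > 0 and let I ⊆ Z/nZ be a k-subset which is a disjoint union of two cyclic intervals A_1 = [1, d_1] and A_2 = [d_1+l_1+1, d_1+l_1+d_2], where d_1 + d_2 = k and l_1 + l_2 = n - k with all d_i, l_i ≥ 1. Define the syzygy sequence of k-subsets by I^{2t} = {a + tk : a ∈ A_1} ∪ {a + tk : a ∈ A_2} and I^{2t+1} = {a - l_2 + tk : a ∈ A_1} ∪ {d_1 + j + tk : 1 ≤ j ≤ d_2} (mod n). If d_1 ≠ d_2 and l_1 ≠ l_2, then the minimal positive integer m with I^m = I is m = 2n/gcd(n,k). -/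
/-- The combinatorial syzygy sequence of a `k`-subset `I ⊆ ℤ/nℤ` which is the disjoint
union of two cyclic intervals `A₁ = [1, d₁]` and `A₂ = [d₁+l₁+1, d₁+l₁+d₂]` (so `k = d₁+d₂`
and `n-k = l₁+l₂`):
`I^{2t} = (A₁ + tk) ∪ (A₂ + tk)` and
`I^{2t+1} = (A₁ - l₂ + tk) ∪ ({d₁+1, …, d₁+d₂} + tk)`, all modulo `n`.
In particular `I^0 = I`. -/
def twoIntervalSyzygy (n d₁ l₁ d₂ l₂ : ℕ) (m : ℕ) : Finset (ZMod n) :=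
  let k := d₁ + d₂
  let A₁ : Finset (ZMod n) := (Finset.Icc 1 d₁).image (fun a : ℕ => (a : ZMod n))
  let A₂ : Finset (ZMod n) :=
    (Finset.Icc (d₁ + l₁ + 1) (d₁ + l₁ + d₂)).image (fun a : ℕ => (a : ZMod n))
  if m % 2 = 0 then
    (A₁ ∪ A₂).image (fun a => a + ((m / 2 * k : ℕ) : ZMod n))
  else
    A₁.image (fun a => a + ((m / 2 * k : ℕ) : ZMod n) - (l₂ : ZMod n)) ∪
      (Finset.Icc (d₁ + 1) (d₁ + d₂)).image
        (fun a : ℕ => (a : ZMod n) + ((m / 2 * k : ℕ) : ZMod n))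


section Aux

variable {n : ℕ} [NeZero n]

/-- helper: ℕ casts to ZMod n, two-case comparison -/
lemma castEqCases {a b : ℕ} (hb : b < n) (ha : a < 2 * n)
    (h : (a : ZMod n) = (b : ZMod n)) : a = b ∨ a = b + n := by
  have hmod : a % n = b % n := (ZMod.natCast_eq_natCast_iff a b n).mp h
  have hb' : b % n = b := Nat.mod_eq_of_lt hb
  have hdiv : a % n + n * (a / n) = a := Nat.mod_add_div a n
  have hq : a / n < 2 := Nat.div_lt_of_lt_mul (by omega)
  interval_cases h : a / n <;> omega

/-- the basic two-interval set -/
def twoSet (n d1 l1 d2 : ℕ) : Finset (ZMod n) :=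
  (Finset.Icc 1 d1 ∪ Finset.Icc (d1 + l1 + 1) (d1 + l1 + d2)).image
    (fun a : ℕ => (a : ZMod n))

lemma mem_twoSet {d1 l1 d2 l2 : ℕ} (hn : d1 + l1 + d2 + l2 = n) (h4 : 0 < l2)
    (x : ZMod n) :
    x ∈ twoSet n d1 l1 d2 ↔
      (1 ≤ x.val ∧ x.val ≤ d1) ∨ (d1 + l1 + 1 ≤ x.val ∧ x.val ≤ d1 + l1 + d2) := by
  constructor
  · intro hx
    simp only [twoSet, Finset.mem_image, Finset.mem_union, Finset.mem_Icc] at hx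
    obtain ⟨a, ha, rfl⟩ := hx
    have halt : a < n := by omega
    rw [ZMod.val_cast_of_lt halt]
    exact ha
  · intro hx
    simp only [twoSet, Finset.mem_image, Finset.mem_union, Finset.mem_Icc]
    exact ⟨x.val, hx, ZMod.natCast_rightInverse x⟩

lemma val_sub_one {x : ZMod n} (h1 : 1 ≤ x.val) : (x - 1).val = x.val - 1 := by
  have hx : ((x.val : ℕ) : ZMod n) = x := ZMod.natCast_rightInverse x
  have h2 : x - 1 = ((x.val - 1 : ℕ) : ZMod n) := by
    rw [eq_comm, eq_sub_iff_add_eq, ← Nat.cast_add_one,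
      show x.val - 1 + 1 = x.val from by omega, hx]
  rw [h2, ZMod.val_cast_of_lt (by have := x.val_lt; omega)]

lemma bpred_char {d1 l1 d2 l2 : ℕ} (hn : d1 + l1 + d2 + l2 = n)
    (h1 : 0 < d1) (h2 : 0 < l1) (h3 : 0 < d2) (h4 : 0 < l2) (x : ZMod n) :
    (x ∈ twoSet n d1 l1 d2 ∧ x - 1 ∉ twoSet n d1 l1 d2) ↔
      (x = ((1 : ℕ) : ZMod n) ∨ x = ((d1 + l1 + 1 : ℕ) : ZMod n)) := by
  have hnpos : 0 < n := by omega
  constructor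
  · rintro ⟨hx, hx1⟩
    rw [mem_twoSet hn h4] at hx
    have hv1 : 1 ≤ x.val := by omega
    rw [mem_twoSet hn h4, val_sub_one hv1] at hx1
    have hval : x.val = 1 ∨ x.val = d1 + l1 + 1 := by omega
    have hx' : ((x.val : ℕ) : ZMod n) = x := ZMod.natCast_rightInverse x
    rcases hval with h | h <;> [left; right] <;> rw [← hx', h]
  · rintro (rfl | rfl)
    · constructor
      · rw [mem_twoSet hn h4, ZMod.val_cast_of_lt (by omega)]; omega
      · rw [mem_twoSet hn h4]
        have : ((1 : ℕ) : ZMod n) - 1 = ((0 : ℕ) : ZMod n) := by push_cast; ring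
        rw [this, ZMod.val_cast_of_lt hnpos]; omega
    · constructor
      · rw [mem_twoSet hn h4, ZMod.val_cast_of_lt (by omega)]; omega
      · rw [mem_twoSet hn h4]
        have : ((d1 + l1 + 1 : ℕ) : ZMod n) - 1 = ((d1 + l1 : ℕ) : ZMod n) := by
          push_cast; ring
        rw [this, ZMod.val_cast_of_lt (by omega)]; omega

lemma epred_char {d1 l1 d2 l2 : ℕ} (hn : d1 + l1 + d2 + l2 = n)
    (h1 : 0 < d1) (h2 : 0 < l1) (h3 : 0 < d2) (h4 : 0 < l2) (x : ZMod n) :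
    (x ∈ twoSet n d1 l1 d2 ∧ x + 1 ∉ twoSet n d1 l1 d2) ↔
      (x = ((d1 : ℕ) : ZMod n) ∨ x = ((d1 + l1 + d2 : ℕ) : ZMod n)) := by
  have hnpos : 0 < n := by omega
  constructor
  · rintro ⟨hx, hx1⟩
    rw [mem_twoSet hn h4] at hx
    have hx' : ((x.val : ℕ) : ZMod n) = x := ZMod.natCast_rightInverse x
    rw [mem_twoSet hn h4] at hx1
    by_cases hw : x.val + 1 < n
    · have hval1 : (x + 1).val = x.val + 1 := by
        have hcomm : ((x.val + 1 : ℕ) : ZMod n) = x + 1 := by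
          rw [Nat.cast_add, Nat.cast_one, hx']
        rw [← hcomm, ZMod.val_cast_of_lt hw]
      rw [hval1] at hx1
      have hval : x.val = d1 ∨ x.val = d1 + l1 + d2 := by omega
      rcases hval with h | h <;> [left; right] <;> rw [← hx', h]
    · -- x.val + 1 = n, so x.val = n - 1, forcing x.val = d1+l1+d2 and l2 = 1
      have hvn : x.val = n - 1 := by have := x.val_lt; omega
      have : x.val = d1 + l1 + d2 := by omega
      right; rw [← hx', this]
  · rintro (rfl | rfl)
    · constructor
      · rw [mem_twoSet hn h4, ZMod.val_cast_of_lt (by omega)]; omega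
      · rw [mem_twoSet hn h4]
        have : ((d1 : ℕ) : ZMod n) + 1 = ((d1 + 1 : ℕ) : ZMod n) := by push_cast; ring
        rw [this, ZMod.val_cast_of_lt (by omega)]; omega
    · constructor
      · rw [mem_twoSet hn h4, ZMod.val_cast_of_lt (by omega)]; omega
      · rw [mem_twoSet hn h4]
        have he : ((d1 + l1 + d2 : ℕ) : ZMod n) + 1 = ((d1 + l1 + d2 + 1 : ℕ) : ZMod n) := by
          push_cast; ring
        rw [he]
        by_cases hl2 : d1 + l1 + d2 + 1 = n
        · rw [hl2, ZMod.natCast_self, ZMod.val_zero]; omega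
        · rw [ZMod.val_cast_of_lt (by omega)]; omega

lemma shift_mem_iff {S T : Finset (ZMod n)} {c : ZMod n}
    (h : S.image (· + c) = T) (y : ZMod n) : y + c ∈ T ↔ y ∈ S := by
  rw [← h]
  simp [Finset.mem_image]

lemma even_shift {d1 l1 d2 l2 : ℕ} (hn : d1 + l1 + d2 + l2 = n)
    (h1 : 0 < d1) (h2 : 0 < l1) (h3 : 0 < d2) (h4 : 0 < l2) (hd : d1 ≠ d2)
    {c : ZMod n} (h : (twoSet n d1 l1 d2).image (· + c) = twoSet n d1 l1 d2) :
    c = 0 := by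
  have hm := shift_mem_iff h
  have hb : ∀ y : ZMod n,
      ((y + c) ∈ twoSet n d1 l1 d2 ∧ (y + c) - 1 ∉ twoSet n d1 l1 d2) ↔
        (y ∈ twoSet n d1 l1 d2 ∧ y - 1 ∉ twoSet n d1 l1 d2) := by
    intro y
    rw [hm y, show (y + c) - 1 = (y - 1) + c from by ring, hm (y - 1)]
  have hB1 : ((1 : ℕ) : ZMod n) + c = ((1 : ℕ) : ZMod n) ∨
      ((1 : ℕ) : ZMod n) + c = ((d1 + l1 + 1 : ℕ) : ZMod n) := by
    refine (bpred_char hn h1 h2 h3 h4 _).mp ?_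
    exact (hb _).mpr ((bpred_char hn h1 h2 h3 h4 _).mpr (Or.inl rfl))
  rcases hB1 with hc | hc
  · exact (add_eq_left).mp hc
  · exfalso
    have he : ∀ y : ZMod n,
        ((y + c) ∈ twoSet n d1 l1 d2 ∧ (y + c) + 1 ∉ twoSet n d1 l1 d2) ↔
          (y ∈ twoSet n d1 l1 d2 ∧ y + 1 ∉ twoSet n d1 l1 d2) := by
      intro y
      rw [hm y, show (y + c) + 1 = (y + 1) + c from by ring, hm (y + 1)]
    have hceq : c = ((d1 + l1 + 1 : ℕ) : ZMod n) - ((1 : ℕ) : ZMod n) := by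
      rw [← hc]; ring
    have hE1 : ((2 * d1 + l1 : ℕ) : ZMod n) = ((d1 : ℕ) : ZMod n) ∨
        ((2 * d1 + l1 : ℕ) : ZMod n) = ((d1 + l1 + d2 : ℕ) : ZMod n) := by
      refine (epred_char hn h1 h2 h3 h4 _).mp ?_
      have harg : ((2 * d1 + l1 : ℕ) : ZMod n) = ((d1 : ℕ) : ZMod n) + c := by
        rw [hceq]; push_cast; ring
      rw [harg]
      exact (he _).mpr ((epred_char hn h1 h2 h3 h4 _).mpr (Or.inl rfl))
    rcases hE1 with h' | h'
    · rcases castEqCases (by omega) (by omega) h' with h'' | h'' <;> omega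
    · rcases castEqCases (by omega) (by omega) h' with h'' | h'' <;> omega

lemma odd_never {d1 l1 d2 l2 : ℕ} (hn : d1 + l1 + d2 + l2 = n)
    (h1 : 0 < d1) (h2 : 0 < l1) (h3 : 0 < d2) (h4 : 0 < l2)
    (hd : d1 ≠ d2) (hl : l1 ≠ l2) {c : ZMod n}
    (h : (twoSet n d1 l2 d2).image (· + c) = twoSet n d1 l1 d2) : False := by
  have hn' : d1 + l2 + d2 + l1 = n := by omega
  have hm := shift_mem_iff h
  have hb : ∀ y : ZMod n,
      ((y + c) ∈ twoSet n d1 l1 d2 ∧ (y + c) - 1 ∉ twoSet n d1 l1 d2) ↔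
        (y ∈ twoSet n d1 l2 d2 ∧ y - 1 ∉ twoSet n d1 l2 d2) := by
    intro y
    rw [hm y, show (y + c) - 1 = (y - 1) + c from by ring, hm (y - 1)]
  have hB1 : ((1 : ℕ) : ZMod n) - c = ((1 : ℕ) : ZMod n) ∨
      ((1 : ℕ) : ZMod n) - c = ((d1 + l2 + 1 : ℕ) : ZMod n) := by
    refine (bpred_char hn' h1 h4 h3 h2 _).mp ?_
    refine (hb _).mp ?_
    have harg : (((1 : ℕ) : ZMod n) - c) + c = ((1 : ℕ) : ZMod n) := by ring
    rw [harg]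
    exact (bpred_char hn h1 h2 h3 h4 _).mpr (Or.inl rfl)
  have hBS2 : (((d1 + l1 + 1 : ℕ) : ZMod n)) ∈ twoSet n d1 l1 d2 ∧
      (((d1 + l1 + 1 : ℕ) : ZMod n)) - 1 ∉ twoSet n d1 l1 d2 :=
    (bpred_char hn h1 h2 h3 h4 _).mpr (Or.inr rfl)
  rcases hB1 with hc | hc
  · -- c = 0
    have hc0 : c = 0 := by
      have := sub_eq_self.mp hc
      exact this
    have hK : ((d1 + l1 + 1 : ℕ) : ZMod n) = ((1 : ℕ) : ZMod n) ∨
        ((d1 + l1 + 1 : ℕ) : ZMod n) = ((d1 + l2 + 1 : ℕ) : ZMod n) := by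
      refine (bpred_char hn' h1 h4 h3 h2 _).mp ?_
      refine (hb _).mp ?_
      rw [hc0, add_zero]
      exact hBS2
    rcases hK with h' | h'
    · rcases castEqCases (by omega) (by omega) h' with h'' | h'' <;> omega
    · rcases castEqCases (by omega) (by omega) h' with h'' | h'' <;> omega
  · have hceq : c = ((1 : ℕ) : ZMod n) - ((d1 + l2 + 1 : ℕ) : ZMod n) := by
      rw [← hc]; ring
    have hK : ((2 * d1 + l1 + l2 + 1 : ℕ) : ZMod n) = ((1 : ℕ) : ZMod n) ∨
        ((2 * d1 + l1 + l2 + 1 : ℕ) : ZMod n) = ((d1 + l2 + 1 : ℕ) : ZMod n) := by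
      refine (bpred_char hn' h1 h4 h3 h2 _).mp ?_
      refine (hb _).mp ?_
      have harg : ((2 * d1 + l1 + l2 + 1 : ℕ) : ZMod n) + c
          = ((d1 + l1 + 1 : ℕ) : ZMod n) := by
        rw [hceq]; push_cast; ring
      rw [harg]
      exact hBS2
    rcases hK with h' | h'
    · rcases castEqCases (by omega) (by omega) h' with h'' | h'' <;> omega
    · rcases castEqCases (by omega) (by omega) h' with h'' | h'' <;> omega

end Aux

lemma syzygy_even (n d1 l1 d2 l2 t : ℕ) [NeZero n] :
    twoIntervalSyzygy n d1 l1 d2 l2 (2 * t) =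
      (twoSet n d1 l1 d2).image (· + ((t * (d1 + d2) : ℕ) : ZMod n)) := by
  have hmod : (2 * t) % 2 = 0 := by omega
  have hdiv : (2 * t) / 2 = t := by omega
  simp only [twoIntervalSyzygy, hmod, hdiv, if_pos, twoSet]
  rw [Finset.image_union, Finset.image_union, Finset.image_union]

lemma syzygy_odd (n d1 l1 d2 l2 t : ℕ) [NeZero n] :
    twoIntervalSyzygy n d1 l1 d2 l2 (2 * t + 1) =
      (twoSet n d1 l2 d2).image
        (· + (((t * (d1 + d2) : ℕ) : ZMod n) - (l2 : ZMod n))) := by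
  have hmod : (2 * t + 1) % 2 = 1 := by omega
  have hdiv : (2 * t + 1) / 2 = t := by omega
  simp only [twoIntervalSyzygy, hmod, hdiv, twoSet]
  rw [if_neg (by omega), Finset.image_union, Finset.image_union]
  congr 1
  · rw [Finset.image_image, Finset.image_image]
    apply Finset.image_congr
    intro a _
    simp only [Function.comp]
    ring
  · have hIcc : Finset.Icc (d1 + l2 + 1) (d1 + l2 + d2)
        = (Finset.Icc (d1 + 1) (d1 + d2)).image (l2 + ·) := by
      rw [Finset.image_add_left_Icc]
      congr 1 <;> omega
    rw [Finset.image_image, hIcc, Finset.image_image]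
    apply Finset.image_congr
    intro a _
    simp only [Function.comp]
    push_cast
    ring

theorem twoIntervalSyzygy_period_of_ne_ne (n k d₁ l₁ d₂ l₂ : ℕ) [NeZero n]
    (hd₁ : 0 < d₁) (hd₂ : 0 < d₂) (hl₁ : 0 < l₁) (hl₂ : 0 < l₂)
    (hk : d₁ + d₂ = k) (hl : l₁ + l₂ = n - k) (hkn : k < n)
    (hd : d₁ ≠ d₂) (hlne : l₁ ≠ l₂) :
    IsLeast {m : ℕ | 0 < m ∧
        twoIntervalSyzygy n d₁ l₁ d₂ l₂ m = twoIntervalSyzygy n d₁ l₁ d₂ l₂ 0}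
      (2 * (n / Nat.gcd n k)) := by
  have hnpos : 0 < n := by omega
  have hn : d₁ + l₁ + d₂ + l₂ = n := by omega
  set g := Nat.gcd n k with hg
  have hg0 : 0 < g := Nat.gcd_pos_of_pos_left _ hnpos
  have hgn : g ∣ n := Nat.gcd_dvd_left n k
  have hgk : g ∣ k := Nat.gcd_dvd_right n k
  have hI0 : twoIntervalSyzygy n d₁ l₁ d₂ l₂ 0 = twoSet n d₁ l₁ d₂ := by
    rw [show (0 : ℕ) = 2 * 0 from rfl, syzygy_even]
    simp
  have hng : 0 < n / g := Nat.div_pos (Nat.le_of_dvd hnpos hgn) hg0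
  constructor
  · refine ⟨by omega, ?_⟩
    rw [show 2 * (n / g) = 2 * (n / g) from rfl, syzygy_even, hI0]
    have hdvd : n ∣ (n / g) * (d₁ + d₂) := by
      obtain ⟨k', hk'⟩ := hgk
      rw [hk, hk', ← mul_assoc, Nat.div_mul_cancel hgn]
      exact Dvd.intro k' rfl
    have hc0 : (((n / g) * (d₁ + d₂) : ℕ) : ZMod n) = 0 :=
      (ZMod.natCast_eq_zero_iff _ _).mpr hdvd
    rw [hc0]
    simp
  · rintro m ⟨hm0, hmeq⟩
    rcases Nat.even_or_odd m with he | ho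
    · -- even case
      rw [Nat.even_iff] at he
      have hm : m = 2 * (m / 2) := by omega
      rw [hm, syzygy_even, hI0] at hmeq
      have hc0 := even_shift hn hd₁ hl₁ hd₂ hl₂ hd hmeq
      have hdvd : n ∣ (m / 2) * k := by
        rw [← hk]
        exact (ZMod.natCast_eq_zero_iff _ _).mp hc0
      set t := m / 2 with ht
      have htpos : 0 < t := by omega
      -- n/g ∣ t
      have hco : Nat.Coprime (n / g) (k / g) := Nat.coprime_div_gcd_div_gcd hg0
      have hdvd2 : (n / g) ∣ t * (k / g) := by
        obtain ⟨c, hc⟩ := hdvd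
        refine ⟨c, ?_⟩
        have e1 : k / g * g = k := Nat.div_mul_cancel hgk
        have e2 : n / g * g = n := Nat.div_mul_cancel hgn
        have h1 : t * (k / g) * g = n / g * c * g := by
          calc t * (k / g) * g = t * (k / g * g) := by ring
            _ = t * k := by rw [e1]
            _ = n * c := hc
            _ = n / g * g * c := by rw [e2]
            _ = n / g * c * g := by ring
        exact Nat.eq_of_mul_eq_mul_right hg0 h1
      have hdvd3 : (n / g) ∣ t := (Nat.Coprime.dvd_of_dvd_mul_right hco) hdvd2
      have hle := Nat.le_of_dvd htpos hdvd3
      exact le_trans (Nat.mul_le_mul_left 2 hle) (by omega)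
    · -- odd case: contradiction
      exfalso
      rw [Nat.odd_iff] at ho
      have hm : m = 2 * (m / 2) + 1 := by omega
      rw [hm, syzygy_odd, hI0] at hmeq
      exact odd_never hn hd₁ hl₁ hd₂ hl₂ hd hlne hmeq
end

section
/- With the setup of the two-interval syzygy sequence: if d_1 = d_2 and l_1 ≠ l_2, then the minimal positive integer m with I^m = I equals min{ 2n/gcd(n,k), 2·min{t ≥ 1 : d_1 + tk ≡ 0 (mod n)} + 1 }, where the second term is omitted if no positive t satisfies d_1 + tk ≡ 0 (mod n). -/
set_option linter.unusedSectionVars false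

section helpers
variable {n : ℕ} [NeZero n]

private lemma val_add_cases (y : ZMod n) (a : ℕ) (ha : a < n) :
    (y + (a : ZMod n)).val = y.val + a ∨ (y + (a : ZMod n)).val + n = y.val + a := by
  have hy := ZMod.val_lt y
  rw [ZMod.val_add, ZMod.val_natCast, Nat.mod_eq_of_lt ha]
  rcases lt_or_ge (y.val + a) n with h | h
  · exact Or.inl (Nat.mod_eq_of_lt h)
  · right
    rw [Nat.mod_eq_sub_mod h, Nat.mod_eq_of_lt (by omega)]
    omega

private lemma val_sub_cases (x c : ZMod n) :
    x.val = (x - c).val + c.val ∨ x.val + n = (x - c).val + c.val := by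
  have h := val_add_cases (x - c) c.val (ZMod.val_lt c)
  rw [ZMod.natCast_rightInverse c] at h
  rw [show x - c + c = x from by ring] at h
  tauto

private lemma mem_image_Icc {a b : ℕ} (hb : b < n) (x : ZMod n) :
    (x ∈ (Finset.Icc a b).image (fun i : ℕ => (i : ZMod n))) ↔ a ≤ x.val ∧ x.val ≤ b := by
  simp only [Finset.mem_image, Finset.mem_Icc]
  constructor
  · rintro ⟨i, ⟨h1, h2⟩, rfl⟩
    rw [ZMod.val_natCast, Nat.mod_eq_of_lt (by omega)]
    exact ⟨h1, h2⟩
  · rintro ⟨h1, h2⟩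
    exact ⟨x.val, ⟨h1, h2⟩, ZMod.natCast_rightInverse x⟩

private lemma mem_image_add {S : Finset (ZMod n)} {c x : ZMod n} :
    x ∈ S.image (fun a => a + c) ↔ x - c ∈ S := by
  simp only [Finset.mem_image]
  constructor
  · rintro ⟨a, ha, rfl⟩
    rwa [show a + c - c = a from by ring]
  · intro h
    exact ⟨x - c, h, by ring⟩

private lemma mem_image_add_sub {S : Finset (ZMod n)} {c e x : ZMod n} :
    x ∈ S.image (fun a => a + c - e) ↔ x + e - c ∈ S := by
  simp only [Finset.mem_image]
  constructor
  · rintro ⟨a, ha, rfl⟩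
    rwa [show a + c - e + e - c = a from by ring]
  · intro h
    exact ⟨x + e - c, h, by ring⟩

private lemma mem_image_cast_add {a b : ℕ} {c x : ZMod n} :
    x ∈ (Finset.Icc a b).image (fun i : ℕ => (i : ZMod n) + c) ↔
      x - c ∈ (Finset.Icc a b).image (fun i : ℕ => (i : ZMod n)) := by
  simp only [Finset.mem_image]
  constructor
  · rintro ⟨i, hi, rfl⟩
    exact ⟨i, hi, by ring⟩
  · rintro ⟨i, hi, h⟩
    exact ⟨i, hi, by rw [h]; ring⟩

end helpers

section main
variable {n d l₁ l₂ : ℕ} [NeZero n]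

private lemma mem_even (hl₂ : 0 < l₂) (hn : n = 2 * d + l₁ + l₂) {m : ℕ} (hm : m % 2 = 0)
    (x : ZMod n) :
    x ∈ twoIntervalSyzygy n d l₁ d l₂ m ↔
      (1 ≤ (x - ((m / 2 * (d + d) : ℕ) : ZMod n)).val ∧
        (x - ((m / 2 * (d + d) : ℕ) : ZMod n)).val ≤ d) ∨
      (d + l₁ + 1 ≤ (x - ((m / 2 * (d + d) : ℕ) : ZMod n)).val ∧
        (x - ((m / 2 * (d + d) : ℕ) : ZMod n)).val ≤ d + l₁ + d) := by
  have hdn : d < n := by omega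
  have h2dn : d + l₁ + d < n := by omega
  simp only [twoIntervalSyzygy]
  rw [if_pos hm, mem_image_add, Finset.mem_union, mem_image_Icc hdn, mem_image_Icc h2dn]

private lemma mem_odd (hl₂ : 0 < l₂) (hn : n = 2 * d + l₁ + l₂) {m : ℕ} (hm : m % 2 = 1)
    (x : ZMod n) :
    x ∈ twoIntervalSyzygy n d l₁ d l₂ m ↔
      (1 ≤ (x + (l₂ : ZMod n) - ((m / 2 * (d + d) : ℕ) : ZMod n)).val ∧
        (x + (l₂ : ZMod n) - ((m / 2 * (d + d) : ℕ) : ZMod n)).val ≤ d) ∨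
      (d + 1 ≤ (x - ((m / 2 * (d + d) : ℕ) : ZMod n)).val ∧
        (x - ((m / 2 * (d + d) : ℕ) : ZMod n)).val ≤ d + d) := by
  have hdn : d < n := by omega
  have hddn : d + d < n := by omega
  simp only [twoIntervalSyzygy]
  rw [if_neg (by omega), Finset.mem_union, mem_image_add_sub, mem_image_cast_add,
    mem_image_Icc hdn, mem_image_Icc hddn]

private lemma even_rigid (hd : 0 < d) (hl₁ : 0 < l₁) (hl₂ : 0 < l₂)
    (hn : n = 2 * d + l₁ + l₂) (hlne : l₁ ≠ l₂) (c : ZMod n)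
    (H : ∀ x : ZMod n,
      ((1 ≤ (x - c).val ∧ (x - c).val ≤ d) ∨
        (d + l₁ + 1 ≤ (x - c).val ∧ (x - c).val ≤ d + l₁ + d)) ↔
      ((1 ≤ x.val ∧ x.val ≤ d) ∨ (d + l₁ + 1 ≤ x.val ∧ x.val ≤ d + l₁ + d))) :
    c = 0 := by
  have hcv := ZMod.val_lt c
  have hv1 : (1 : ZMod n).val = 1 := by rw [ZMod.val_one_eq_one_mod]; exact Nat.mod_eq_of_lt (by omega)
  have hvp : (((d + l₁ + 1 : ℕ) : ZMod n)).val = d + l₁ + 1 := ZMod.val_cast_of_lt (by omega)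
  have hvq : (((d + l₁ : ℕ) : ZMod n)).val = d + l₁ := ZMod.val_cast_of_lt (by omega)
  have h1 := H 1
  have h0 := H 0
  have h3 := H ((d + l₁ + 1 : ℕ) : ZMod n)
  have h4 := H ((d + l₁ : ℕ) : ZMod n)
  rw [hv1] at h1
  rw [ZMod.val_zero] at h0
  rw [hvp] at h3
  rw [hvq] at h4
  have r1 := val_sub_cases (1 : ZMod n) c
  have r0 := val_sub_cases (0 : ZMod n) c
  have r3 := val_sub_cases (((d + l₁ + 1 : ℕ) : ZMod n)) c
  have r4 := val_sub_cases (((d + l₁ : ℕ) : ZMod n)) c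
  rw [hv1] at r1
  rw [ZMod.val_zero] at r0
  rw [hvp] at r3
  rw [hvq] at r4
  have b1 := ZMod.val_lt ((1 : ZMod n) - c)
  have b0 := ZMod.val_lt ((0 : ZMod n) - c)
  have b3 := ZMod.val_lt (((d + l₁ + 1 : ℕ) : ZMod n) - c)
  have b4 := ZMod.val_lt (((d + l₁ : ℕ) : ZMod n) - c)
  obtain ⟨a1, ha1⟩ : ∃ a, ((1 : ZMod n) - c).val = a := ⟨_, rfl⟩
  obtain ⟨a0, ha0⟩ : ∃ a, ((0 : ZMod n) - c).val = a := ⟨_, rfl⟩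
  obtain ⟨a3, ha3⟩ : ∃ a, (((d + l₁ + 1 : ℕ) : ZMod n) - c).val = a := ⟨_, rfl⟩
  obtain ⟨a4, ha4⟩ : ∃ a, (((d + l₁ : ℕ) : ZMod n) - c).val = a := ⟨_, rfl⟩
  rw [ha1] at h1 r1 b1
  rw [ha0] at h0 r0 b0
  rw [ha3] at h3 r3 b3
  rw [ha4] at h4 r4 b4
  have hc0 : c.val = 0 := by omega
  have := ZMod.natCast_rightInverse c
  rw [hc0] at this
  simpa using this.symm

private lemma arith1 (n d l1 l2 cv a1 e1 a0 e0 : ℕ)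
 (hn : n = 2*d+l1+l2) (hd : 0 < d) (hl1 : 0<l1) (hl2 : 0<l2) (hcv : cv < n)
 (ba1 : a1 < n) (be1 : e1 < n) (ba0 : a0 < n) (be0 : e0 < n)
 (r1 : 1 = a1 + cv ∨ 1 + n = a1 + cv) (s1 : e1 = a1 + l2 ∨ e1 + n = a1 + l2)
 (r0 : 0 = a0 + cv ∨ 0 + n = a0 + cv) (s0 : e0 = a0 + l2 ∨ e0 + n = a0 + l2)
 (h1 : (1 ≤ e1 ∧ e1 ≤ d) ∨ (d+1 ≤ a1 ∧ a1 ≤ d+d) ↔ ((1 ≤ 1 ∧ 1 ≤ d) ∨ (d+l1+1 ≤ 1 ∧ 1 ≤ d+l1+d)))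
 (h0 : (1 ≤ e0 ∧ e0 ≤ d) ∨ (d+1 ≤ a0 ∧ a0 ≤ d+d) ↔ ((1 ≤ 0 ∧ 0 ≤ d) ∨ (d+l1+1 ≤ 0 ∧ 0 ≤ d+l1+d))) :
 cv = l2 ∨ cv = n - d := by omega
private lemma arith2 (n d l1 l2 cv a3 e3 a4 e4 : ℕ)
 (hn : n = 2*d+l1+l2) (hd : 0 < d) (hl1 : 0<l1) (hl2 : 0<l2) (hlne : l1 ≠ l2) (hcv : cv = l2)
 (ba3 : a3 < n) (be3 : e3 < n) (ba4 : a4 < n) (be4 : e4 < n)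
 (r3 : d+l1+1 = a3 + cv ∨ d+l1+1 + n = a3 + cv) (s3 : e3 = a3 + l2 ∨ e3 + n = a3 + l2)
 (r4 : d+l1 = a4 + cv ∨ d+l1 + n = a4 + cv) (s4 : e4 = a4 + l2 ∨ e4 + n = a4 + l2)
 (h3 : (1 ≤ e3 ∧ e3 ≤ d) ∨ (d+1 ≤ a3 ∧ a3 ≤ d+d) ↔ ((1 ≤ d+l1+1 ∧ d+l1+1 ≤ d) ∨ (d+l1+1 ≤ d+l1+1 ∧ d+l1+1 ≤ d+l1+d)))
 (h4 : (1 ≤ e4 ∧ e4 ≤ d) ∨ (d+1 ≤ a4 ∧ a4 ≤ d+d) ↔ ((1 ≤ d+l1 ∧ d+l1 ≤ d) ∨ (d+l1+1 ≤ d+l1 ∧ d+l1 ≤ d+l1+d))) :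
 False := by omega

private lemma arith3 (n d l1 l2 v u b2 : ℕ)
 (hn : n = 2*d+l1+l2) (hd : 0 < d) (hl1 : 0<l1) (hl2 : 0<l2)
 (hv : v < n) (hu : u < n) (hb : b2 < n)
 (r : v = u + (n - d) ∨ v + n = u + (n - d))
 (s : b2 = u + l2 ∨ b2 + n = u + l2) :
 ((1 ≤ b2 ∧ b2 ≤ d) ∨ (d+1 ≤ u ∧ u ≤ d+d)) ↔ ((1 ≤ v ∧ v ≤ d) ∨ (d+l1+1 ≤ v ∧ v ≤ d+l1+d)) := by
  omega

set_option maxHeartbeats 2000000 in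
private lemma odd_rigid (hd : 0 < d) (hl₁ : 0 < l₁) (hl₂ : 0 < l₂)
    (hn : n = 2 * d + l₁ + l₂) (hlne : l₁ ≠ l₂) (c : ZMod n)
    (H : ∀ x : ZMod n,
      ((1 ≤ (x + (l₂ : ZMod n) - c).val ∧ (x + (l₂ : ZMod n) - c).val ≤ d) ∨
        (d + 1 ≤ (x - c).val ∧ (x - c).val ≤ d + d)) ↔
      ((1 ≤ x.val ∧ x.val ≤ d) ∨ (d + l₁ + 1 ≤ x.val ∧ x.val ≤ d + l₁ + d))) :
    c = ((n - d : ℕ) : ZMod n) := by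
  have hcv := ZMod.val_lt c
  have hv1 : (1 : ZMod n).val = 1 := by
    rw [ZMod.val_one_eq_one_mod]; exact Nat.mod_eq_of_lt (by omega)
  have hvp : (((d + l₁ + 1 : ℕ) : ZMod n)).val = d + l₁ + 1 := ZMod.val_cast_of_lt (by omega)
  have hvq : (((d + l₁ : ℕ) : ZMod n)).val = d + l₁ := ZMod.val_cast_of_lt (by omega)
  have h1 := H 1
  have h0 := H 0
  have h3 := H ((d + l₁ + 1 : ℕ) : ZMod n)
  have h4 := H ((d + l₁ : ℕ) : ZMod n)
  rw [hv1, show (1 : ZMod n) + (l₂ : ZMod n) - c = (1 : ZMod n) - c + (l₂ : ZMod n) from by ring]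
    at h1
  rw [ZMod.val_zero,
    show (0 : ZMod n) + (l₂ : ZMod n) - c = (0 : ZMod n) - c + (l₂ : ZMod n) from by ring] at h0
  rw [hvp, show ((d + l₁ + 1 : ℕ) : ZMod n) + (l₂ : ZMod n) - c
      = ((d + l₁ + 1 : ℕ) : ZMod n) - c + (l₂ : ZMod n) from by ring] at h3
  rw [hvq, show ((d + l₁ : ℕ) : ZMod n) + (l₂ : ZMod n) - c
      = ((d + l₁ : ℕ) : ZMod n) - c + (l₂ : ZMod n) from by ring] at h4
  have r1 := val_sub_cases (1 : ZMod n) c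
  have r0 := val_sub_cases (0 : ZMod n) c
  have r3 := val_sub_cases (((d + l₁ + 1 : ℕ) : ZMod n)) c
  have r4 := val_sub_cases (((d + l₁ : ℕ) : ZMod n)) c
  rw [hv1] at r1
  rw [ZMod.val_zero] at r0
  rw [hvp] at r3
  rw [hvq] at r4
  have s1 := val_add_cases ((1 : ZMod n) - c) l₂ (by omega)
  have s0 := val_add_cases ((0 : ZMod n) - c) l₂ (by omega)
  have s3 := val_add_cases (((d + l₁ + 1 : ℕ) : ZMod n) - c) l₂ (by omega)
  have s4 := val_add_cases (((d + l₁ : ℕ) : ZMod n) - c) l₂ (by omega)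
  have b1 := ZMod.val_lt ((1 : ZMod n) - c)
  have b0 := ZMod.val_lt ((0 : ZMod n) - c)
  have b3 := ZMod.val_lt (((d + l₁ + 1 : ℕ) : ZMod n) - c)
  have b4 := ZMod.val_lt (((d + l₁ : ℕ) : ZMod n) - c)
  have c1 := ZMod.val_lt ((1 : ZMod n) - c + (l₂ : ZMod n))
  have c0 := ZMod.val_lt ((0 : ZMod n) - c + (l₂ : ZMod n))
  have c3 := ZMod.val_lt (((d + l₁ + 1 : ℕ) : ZMod n) - c + (l₂ : ZMod n))
  have c4 := ZMod.val_lt (((d + l₁ : ℕ) : ZMod n) - c + (l₂ : ZMod n))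
  have step1 := arith1 n d l₁ l₂ c.val ((1 : ZMod n) - c).val ((1 : ZMod n) - c + (l₂ : ZMod n)).val
    ((0 : ZMod n) - c).val ((0 : ZMod n) - c + (l₂ : ZMod n)).val
    hn hd hl₁ hl₂ hcv b1 c1 b0 c0 r1 s1 r0 s0 h1 h0
  have hc0 : c.val = n - d := by
    rcases step1 with h' | h'
    · exact absurd (arith2 n d l₁ l₂ c.val (((d + l₁ + 1 : ℕ) : ZMod n) - c).val
        (((d + l₁ + 1 : ℕ) : ZMod n) - c + (l₂ : ZMod n)).val
        (((d + l₁ : ℕ) : ZMod n) - c).val (((d + l₁ : ℕ) : ZMod n) - c + (l₂ : ZMod n)).val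
        hn hd hl₁ hl₂ hlne h' b3 c3 b4 c4 r3 s3 r4 s4 h3 h4) (not_false)
    · exact h'
  have h := ZMod.natCast_rightInverse c
  rw [hc0] at h
  exact h.symm

private lemma even_iff (hd : 0 < d) (hl₁ : 0 < l₁) (hl₂ : 0 < l₂)
    (hn : n = 2 * d + l₁ + l₂) (hlne : l₁ ≠ l₂) {m : ℕ} (hm : m % 2 = 0) :
    twoIntervalSyzygy n d l₁ d l₂ m = twoIntervalSyzygy n d l₁ d l₂ 0 ↔
      ((m / 2 * (d + d) : ℕ) : ZMod n) = 0 := by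
  have h0 : ∀ x : ZMod n, x ∈ twoIntervalSyzygy n d l₁ d l₂ 0 ↔
      ((1 ≤ x.val ∧ x.val ≤ d) ∨ (d + l₁ + 1 ≤ x.val ∧ x.val ≤ d + l₁ + d)) := by
    intro x
    have h := mem_even hl₂ hn (m := 0) rfl x
    simpa using h
  constructor
  · intro hEq
    refine even_rigid hd hl₁ hl₂ hn hlne _ (fun x => ?_)
    rw [← mem_even hl₂ hn hm x, hEq, h0 x]
  · intro hc
    ext x
    rw [mem_even hl₂ hn hm x, h0 x, hc, sub_zero]

set_option maxHeartbeats 2000000 in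
private lemma odd_iff (hd : 0 < d) (hl₁ : 0 < l₁) (hl₂ : 0 < l₂)
    (hn : n = 2 * d + l₁ + l₂) (hlne : l₁ ≠ l₂) {m : ℕ} (hm : m % 2 = 1) :
    twoIntervalSyzygy n d l₁ d l₂ m = twoIntervalSyzygy n d l₁ d l₂ 0 ↔
      ((d + m / 2 * (d + d) : ℕ) : ZMod n) = 0 := by
  have h0 : ∀ x : ZMod n, x ∈ twoIntervalSyzygy n d l₁ d l₂ 0 ↔
      ((1 ≤ x.val ∧ x.val ≤ d) ∨ (d + l₁ + 1 ≤ x.val ∧ x.val ≤ d + l₁ + d)) := by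
    intro x
    have h := mem_even hl₂ hn (m := 0) rfl x
    simpa using h
  have hsplit : ((d + m / 2 * (d + d) : ℕ) : ZMod n)
      = ((d : ℕ) : ZMod n) + ((m / 2 * (d + d) : ℕ) : ZMod n) := by push_cast; ring
  have hnd : (((n - d : ℕ) : ZMod n)) = - ((d : ℕ) : ZMod n) := by
    have : ((n : ℕ) : ZMod n) = 0 := ZMod.natCast_self n
    have h2 : (n - d) + d = n := by omega
    have h3 : (((n - d) + d : ℕ) : ZMod n) = 0 := by rw [h2, this]
    push_cast at h3
    linear_combination h3
  constructor
  · intro hEq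
    have hc := odd_rigid hd hl₁ hl₂ hn hlne _ (fun x => by
      rw [← mem_odd hl₂ hn hm x, hEq, h0 x])
    rw [hsplit, hc, hnd]
    ring
  · intro hc
    have hc' : ((m / 2 * (d + d) : ℕ) : ZMod n) = ((n - d : ℕ) : ZMod n) := by
      rw [hsplit] at hc
      rw [hnd]
      linear_combination hc
    have hcv : ((m / 2 * (d + d) : ℕ) : ZMod n).val = n - d := by
      rw [hc']; exact ZMod.val_cast_of_lt (by omega)
    ext x
    rw [mem_odd hl₂ hn hm x, h0 x]
    set c : ZMod n := ((m / 2 * (d + d) : ℕ) : ZMod n) with hcdef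
    have r := val_sub_cases x c
    have s := val_add_cases (x - c) l₂ (by omega)
    rw [show x + (l₂ : ZMod n) - c = x - c + (l₂ : ZMod n) from by ring]
    have bx := ZMod.val_lt x
    have b := ZMod.val_lt (x - c)
    have c' := ZMod.val_lt (x - c + (l₂ : ZMod n))
    rw [hcv] at r
    exact arith3 n d l₁ l₂ x.val (x - c).val (x - c + (l₂ : ZMod n)).val
      hn hd hl₁ hl₂ bx b c' r s

end main

/-- With `I` a disjoint union of two cyclic intervals of sizes
`d₁ = d₂` separated by gaps of sizes `l₁ ≠ l₂`, the minimal positive `m` with `I^m = I`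
is `min{2n/gcd(n,k), 2·min{t ≥ 1 : d₁ + tk ≡ 0 (mod n)} + 1}`, the second candidate
being omitted when no positive `t` satisfies `d₁ + tk ≡ 0 (mod n)`. -/
theorem twoIntervalSyzygy_period_of_eq_ne (n k d₁ l₁ d₂ l₂ : ℕ) [NeZero n]
    (hd₁ : 0 < d₁) (hd₂ : 0 < d₂) (hl₁ : 0 < l₁) (hl₂ : 0 < l₂)
    (hk : d₁ + d₂ = k) (hl : l₁ + l₂ = n - k) (hkn : k < n)
    (hd : d₁ = d₂) (hlne : l₁ ≠ l₂) :
    IsLeast {m : ℕ | 0 < m ∧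
        twoIntervalSyzygy n d₁ l₁ d₂ l₂ m = twoIntervalSyzygy n d₁ l₁ d₂ l₂ 0}
      (sInf ({2 * (n / Nat.gcd n k)} ∪
        (fun t => 2 * t + 1) '' {t : ℕ | 0 < t ∧ d₁ + t * k ≡ 0 [MOD n]})) := by
  subst hd
  subst hk
  have hn0 : 0 < n := Nat.pos_of_ne_zero (NeZero.ne n)
  have hn : n = 2 * d₁ + l₁ + l₂ := by omega
  have hper : ∀ m : ℕ,
      (twoIntervalSyzygy n d₁ l₁ d₁ l₂ m = twoIntervalSyzygy n d₁ l₁ d₁ l₂ 0) ↔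
      ((m % 2 = 0 ∧ n ∣ m / 2 * (d₁ + d₁)) ∨ (m % 2 = 1 ∧ n ∣ d₁ + m / 2 * (d₁ + d₁))) := by
    intro m
    rcases Nat.mod_two_eq_zero_or_one m with hm | hm
    · rw [even_iff hd₁ hl₁ hl₂ hn hlne hm, ZMod.natCast_eq_zero_iff]
      constructor
      · exact fun h => Or.inl ⟨hm, h⟩
      · rintro (⟨_, h⟩ | ⟨h, _⟩)
        · exact h
        · omega
    · rw [odd_iff hd₁ hl₁ hl₂ hn hlne hm, ZMod.natCast_eq_zero_iff]
      constructor
      · exact fun h => Or.inr ⟨hm, h⟩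
      · rintro (⟨h, _⟩ | ⟨_, h⟩)
        · omega
        · exact h
  have hgd : Nat.gcd n (d₁ + d₁) ∣ (d₁ + d₁) := Nat.gcd_dvd_right _ _
  have hgn : Nat.gcd n (d₁ + d₁) ∣ n := Nat.gcd_dvd_left _ _
  have hgpos : 0 < Nat.gcd n (d₁ + d₁) := Nat.gcd_pos_of_pos_left _ hn0
  have hqpos : 0 < n / Nat.gcd n (d₁ + d₁) := Nat.div_pos (Nat.le_of_dvd hn0 hgn) hgpos
  obtain ⟨k', hk'⟩ := hgd
  have hdvd2 : n ∣ n / Nat.gcd n (d₁ + d₁) * (d₁ + d₁) := by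
    refine ⟨k', ?_⟩
    calc n / Nat.gcd n (d₁ + d₁) * (d₁ + d₁)
        = n / Nat.gcd n (d₁ + d₁) * (Nat.gcd n (d₁ + d₁) * k') := by rw [← hk']
      _ = n / Nat.gcd n (d₁ + d₁) * Nat.gcd n (d₁ + d₁) * k' := by ring
      _ = n * k' := by rw [Nat.div_mul_cancel hgn]
  have hSsub : ∀ m : ℕ, m ∈ ({2 * (n / Nat.gcd n (d₁ + d₁))} ∪
        (fun t => 2 * t + 1) '' {t : ℕ | 0 < t ∧ d₁ + t * (d₁ + d₁) ≡ 0 [MOD n]} : Set ℕ) →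
      0 < m ∧ twoIntervalSyzygy n d₁ l₁ d₁ l₂ m = twoIntervalSyzygy n d₁ l₁ d₁ l₂ 0 := by
    intro m hm
    simp only [Set.mem_union, Set.mem_singleton_iff, Set.mem_image, Set.mem_setOf_eq] at hm
    rcases hm with rfl | ⟨t, ⟨ht, hmod⟩, rfl⟩
    · refine ⟨by omega, (hper _).mpr (Or.inl ⟨Nat.mul_mod_right 2 _, ?_⟩)⟩
      rw [Nat.mul_div_cancel_left _ (by norm_num : 0 < 2)]
      exact hdvd2
    · refine ⟨by omega, (hper _).mpr (Or.inr ⟨by omega, ?_⟩)⟩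
      have h2 : (2 * t + 1) / 2 = t := by omega
      rw [h2]
      exact Nat.modEq_zero_iff_dvd.mp hmod
  have hne : ({2 * (n / Nat.gcd n (d₁ + d₁))} ∪
      (fun t => 2 * t + 1) '' {t : ℕ | 0 < t ∧ d₁ + t * (d₁ + d₁) ≡ 0 [MOD n]} : Set ℕ).Nonempty :=
    ⟨2 * (n / Nat.gcd n (d₁ + d₁)), Set.mem_union_left _ rfl⟩
  constructor
  · exact hSsub _ (Nat.sInf_mem hne)
  · intro m hm
    obtain ⟨hm0, hmEq⟩ := hm
    rcases (hper m).mp hmEq with ⟨he, hdvd⟩ | ⟨ho, hdvd⟩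
    · obtain ⟨a, ha⟩ := hdvd
      have ht : 0 < m / 2 := by omega
      have h1 : n / Nat.gcd n (d₁ + d₁) ∣ m / 2 * ((d₁ + d₁) / Nat.gcd n (d₁ + d₁)) := by
        refine ⟨a, ?_⟩
        apply Nat.eq_of_mul_eq_mul_left hgpos
        calc Nat.gcd n (d₁ + d₁) * (m / 2 * ((d₁ + d₁) / Nat.gcd n (d₁ + d₁)))
            = m / 2 * (Nat.gcd n (d₁ + d₁) * ((d₁ + d₁) / Nat.gcd n (d₁ + d₁))) := by ring
          _ = m / 2 * (d₁ + d₁) := by rw [Nat.mul_div_cancel' (Nat.gcd_dvd_right _ _)]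
          _ = n * a := ha
          _ = Nat.gcd n (d₁ + d₁) * (n / Nat.gcd n (d₁ + d₁)) * a := by
              rw [Nat.mul_div_cancel' hgn]
          _ = Nat.gcd n (d₁ + d₁) * (n / Nat.gcd n (d₁ + d₁) * a) := by ring
      have h2 : (n / Nat.gcd n (d₁ + d₁)).Coprime ((d₁ + d₁) / Nat.gcd n (d₁ + d₁)) :=
        Nat.coprime_div_gcd_div_gcd hgpos
      have h3 : n / Nat.gcd n (d₁ + d₁) ∣ m / 2 := h2.dvd_of_dvd_mul_right h1
      have h4 : n / Nat.gcd n (d₁ + d₁) ≤ m / 2 := Nat.le_of_dvd ht h3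
      exact le_trans (Nat.sInf_le (Set.mem_union_left _ rfl)) (by omega)
    · have ht : 0 < m / 2 := by
        rcases Nat.eq_zero_or_pos (m / 2) with h | h
        · rw [h, zero_mul, Nat.add_zero] at hdvd
          have := Nat.le_of_dvd hd₁ hdvd
          omega
        · exact h
      refine Nat.sInf_le (Set.mem_union_right _ ⟨m / 2, ⟨ht, ?_⟩, show 2 * (m / 2) + 1 = m by omega⟩)
      exact Nat.modEq_zero_iff_dvd.mpr hdvd
end

section
/- With the setup of the two-interval syzygy sequence: if d_1 ≠ d_2 and l_1 = l_2, then the minimal positive integer m with I^m = I equals min{ 2n/gcd(n,k), 2·min{t ≥ 1 : tk - l_2 ≡ 0 (mod n)} + 1 }, where the second term is omitted if no positive t satisfies tk ≡ l_2 (mod n). -/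
/-!
With equal gaps `l₁ = l₂ = l`, every term of the sequence is a translate of `I = I^0`:
`I^{2t} = I + tk` and `I^{2t+1} = I + (tk - l)`. When `d₁ ≠ d₂`, the set `I` has no nontrivial
translation symmetry: a translation preserving `I` permutes its two right ends `d₁` and
`d₁ + l + d₂` (points `x ∈ I` with `x + 1 ∉ I`), and swapping them forces `n ∣ 2(l + d₂)`, i.e.
`n = 2(l + d₂)`, i.e. `d₁ = d₂`. Hence `I^{2t} = I` iff `n ∣ tk` iff `n / gcd(n, k) ∣ t`, and
`I^{2t+1} = I` iff `tk ≡ l (mod n)`, which fails for `t = 0` because `0 < l < n`.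
-/

lemma Nat.isLeast_sInf_of_subset_of_exists_le {P S : Set ℕ} (hS : S.Nonempty) (hSP : S ⊆ P)
    (hPS : ∀ m ∈ P, ∃ s ∈ S, s ≤ m) : IsLeast P (sInf S) :=
  ⟨hSP (Nat.sInf_mem hS), fun m hm =>
    let ⟨_, hs, hsm⟩ := hPS m hm
    (Nat.sInf_le hs).trans hsm⟩

lemma Nat.dvd_mul_iff_div_gcd_dvd {n : ℕ} (hn : n ≠ 0) (k t : ℕ) :
    n ∣ t * k ↔ n / n.gcd k ∣ t := by
  rw [← ZMod.addOrderOf_coe k hn, addOrderOf_dvd_iff_nsmul_eq_zero, nsmul_eq_mul,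
    ← Nat.cast_mul, ZMod.natCast_eq_zero_iff]

lemma add_mem_iff_of_image_add_right_eq {G : Type*} [AddGroup G] [DecidableEq G]
    {S : Finset G} {c : G} (h : S.image (· + c) = S) (x : G) : x + c ∈ S ↔ x ∈ S := by
  conv_lhs => rw [← h]
  simp

lemma eq_zero_or_swap_of_add_right_pair_invariant {G : Type*} [AddGroup G] {a b c : G}
    (h : ∀ x, x + c = a ∨ x + c = b ↔ x = a ∨ x = b) : c = 0 ∨ a + c = b ∧ b + c = a := by
  rcases (h a).2 (Or.inl rfl) with ha | ha
  · exact Or.inl (by simpa using ha)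
  rcases (h b).2 (Or.inr rfl) with hb | hb
  · exact Or.inr ⟨ha, hb⟩
  · exact Or.inl (by simpa using hb)

lemma twoIntervalSyzygy_two_mul (n d₁ l₁ d₂ l₂ t : ℕ) :
    twoIntervalSyzygy n d₁ l₁ d₂ l₂ (2 * t) =
      (twoIntervalSyzygy n d₁ l₁ d₂ l₂ 0).image (· + ((t * (d₁ + d₂) : ℕ) : ZMod n)) := by
  simp [twoIntervalSyzygy]

lemma twoIntervalSyzygy_two_mul_add_one (n d₁ l d₂ t : ℕ) :
    twoIntervalSyzygy n d₁ l d₂ l (2 * t + 1) =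
      (twoIntervalSyzygy n d₁ l d₂ l 0).image (· + (((t * (d₁ + d₂) : ℕ) : ZMod n) - l)) := by
  have hA₂ : Finset.Icc (d₁ + l + 1) (d₁ + l + d₂) =
      (Finset.Icc (d₁ + 1) (d₁ + d₂)).image (· + l) := by
    rw [Finset.image_add_right_Icc]; congr 1 <;> ring
  have hodd : (2 * t + 1) % 2 ≠ 0 := by omega
  have hhalf : (2 * t + 1) / 2 = t := by omega
  simp only [twoIntervalSyzygy, hodd, hhalf, if_false, Nat.zero_mod, Nat.zero_div, zero_mul,
    Nat.cast_zero, add_zero, if_true, hA₂, Finset.image_union, Finset.image_image]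
  congr 1 <;> refine Finset.image_congr fun a _ => ?_ <;> simp only [Function.comp_apply] <;>
    push_cast <;> ring

lemma natCast_mem_twoIntervalSyzygy_zero_iff {n d₁ l₁ d₂ l₂ v : ℕ} (hlt : d₁ + l₁ + d₂ < n)
    (hv : v < n) :
    (v : ZMod n) ∈ twoIntervalSyzygy n d₁ l₁ d₂ l₂ 0 ↔
      1 ≤ v ∧ v ≤ d₁ ∨ d₁ + l₁ + 1 ≤ v ∧ v ≤ d₁ + l₁ + d₂ := by
  have hcast : ∀ a, a ≤ d₁ + l₁ + d₂ → ((a : ZMod n) = v ↔ a = v) := fun a ha => by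
    rw [ZMod.natCast_eq_natCast_iff', Nat.mod_eq_of_lt (by omega), Nat.mod_eq_of_lt hv]
  simp only [twoIntervalSyzygy, Nat.zero_mod, if_true, Nat.zero_div, zero_mul, Nat.cast_zero,
    add_zero, Finset.image_id', Finset.mem_union, Finset.mem_image, Finset.mem_Icc]
  constructor
  · rintro (⟨a, ha, hav⟩ | ⟨a, ha, hav⟩) <;> rw [hcast a (by omega)] at hav <;> omega
  · rintro (hv | hv)
    · exact Or.inl ⟨v, hv, rfl⟩
    · exact Or.inr ⟨v, hv, rfl⟩

lemma twoIntervalSyzygy_zero_right_end_iff {n d₁ l₁ d₂ l₂ : ℕ} [NeZero n] (hd₁ : 0 < d₁)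
    (hd₂ : 0 < d₂) (hl₁ : 0 < l₁) (hlt : d₁ + l₁ + d₂ < n) (x : ZMod n) :
    x ∈ twoIntervalSyzygy n d₁ l₁ d₂ l₂ 0 ∧ x + 1 ∉ twoIntervalSyzygy n d₁ l₁ d₂ l₂ 0 ↔
      x = d₁ ∨ x = (d₁ + l₁ + d₂ : ℕ) := by
  obtain ⟨v, hv, rfl⟩ : ∃ v < n, (v : ZMod n) = x := ⟨x.val, x.val_lt, x.natCast_zmod_val⟩
  have hsucc : (v : ZMod n) + 1 = ((if v + 1 < n then v + 1 else 0 : ℕ) : ZMod n) := by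
    split_ifs with h
    · exact (Nat.cast_succ v).symm
    · rw [Nat.cast_zero, ← Nat.cast_succ, show v.succ = n by omega, ZMod.natCast_self]
  have hcast : ∀ a < n, ((v : ZMod n) = a ↔ v = a) := fun a ha => by
    rw [ZMod.natCast_eq_natCast_iff', Nat.mod_eq_of_lt hv, Nat.mod_eq_of_lt ha]
  rw [hsucc, natCast_mem_twoIntervalSyzygy_zero_iff hlt hv,
    natCast_mem_twoIntervalSyzygy_zero_iff hlt (by split_ifs <;> omega),
    hcast _ (by omega), hcast _ hlt]
  split_ifs <;> omega

lemma twoIntervalSyzygy_zero_image_add_eq_self_iff {n d₁ l₁ d₂ l₂ : ℕ} [NeZero n]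
    (hd₁ : 0 < d₁) (hd₂ : 0 < d₂) (hl₁ : 0 < l₁) (hl₂ : 0 < l₂) (hn : n = d₁ + l₁ + d₂ + l₂)
    (hne : d₁ + l₂ ≠ d₂ + l₁) {c : ZMod n} :
    (twoIntervalSyzygy n d₁ l₁ d₂ l₂ 0).image (· + c) = twoIntervalSyzygy n d₁ l₁ d₂ l₂ 0 ↔
      c = 0 := by
  refine ⟨fun h => ?_, by rintro rfl; simp⟩
  have hends := twoIntervalSyzygy_zero_right_end_iff (n := n) (l₂ := l₂) hd₁ hd₂ hl₁ (by omega)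
  obtain hc | ⟨h₁, h₂⟩ := eq_zero_or_swap_of_add_right_pair_invariant (c := c) fun x => by
    rw [← hends, ← hends, add_right_comm, add_mem_iff_of_image_add_right_eq h,
      add_mem_iff_of_image_add_right_eq h]
  · exact hc
  have hc : c = ((l₁ + d₂ : ℕ) : ZMod n) := by
    rw [eq_sub_of_add_eq' h₁]; push_cast; ring
  rw [hc, ← Nat.cast_add, ZMod.natCast_eq_natCast_iff] at h₂
  have hdvd := (Nat.modEq_iff_dvd' (by omega)).1 h₂.symm
  have := Nat.eq_of_dvd_of_lt_two_mul (by omega) hdvd (by omega)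
  omega

lemma twoIntervalSyzygy_two_mul_eq_twoIntervalSyzygy_zero_iff {n d₁ l d₂ : ℕ} [NeZero n]
    (hd₁ : 0 < d₁) (hd₂ : 0 < d₂) (hl : 0 < l) (hn : n = d₁ + l + d₂ + l) (hd : d₁ ≠ d₂)
    (t : ℕ) :
    twoIntervalSyzygy n d₁ l d₂ l (2 * t) = twoIntervalSyzygy n d₁ l d₂ l 0 ↔
      n ∣ t * (d₁ + d₂) := by
  rw [twoIntervalSyzygy_two_mul, twoIntervalSyzygy_zero_image_add_eq_self_iff hd₁ hd₂ hl hl hn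
    (by omega), ZMod.natCast_eq_zero_iff]

lemma twoIntervalSyzygy_two_mul_add_one_eq_twoIntervalSyzygy_zero_iff {n d₁ l d₂ : ℕ}
    [NeZero n] (hd₁ : 0 < d₁) (hd₂ : 0 < d₂) (hl : 0 < l) (hn : n = d₁ + l + d₂ + l)
    (hd : d₁ ≠ d₂) (t : ℕ) :
    twoIntervalSyzygy n d₁ l d₂ l (2 * t + 1) = twoIntervalSyzygy n d₁ l d₂ l 0 ↔
      t * (d₁ + d₂) ≡ l [MOD n] := by
  rw [twoIntervalSyzygy_two_mul_add_one, twoIntervalSyzygy_zero_image_add_eq_self_iff hd₁ hd₂ hl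
    hl hn (by omega), sub_eq_zero, ZMod.natCast_eq_natCast_iff]

theorem twoIntervalSyzygy_period_of_ne_eq_general (n k d₁ l₁ d₂ l₂ : ℕ) [NeZero n]
    (hd₁ : 0 < d₁) (hd₂ : 0 < d₂) (hl₁ : 0 < l₁)
    (hk : d₁ + d₂ = k) (hl : l₁ + l₂ = n - k)
    (hd : d₁ ≠ d₂) (hleq : l₁ = l₂) :
    IsLeast {m : ℕ | 0 < m ∧
        twoIntervalSyzygy n d₁ l₁ d₂ l₂ m = twoIntervalSyzygy n d₁ l₁ d₂ l₂ 0}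
      (sInf ({2 * (n / Nat.gcd n k)} ∪
        (fun t => 2 * t + 1) '' {t : ℕ | 0 < t ∧ t * k ≡ l₂ [MOD n]})) := by
  subst hk hleq
  have hn : n = d₁ + l₁ + d₂ + l₁ := by omega
  have heven := twoIntervalSyzygy_two_mul_eq_twoIntervalSyzygy_zero_iff hd₁ hd₂ hl₁ hn hd
  have hodd := twoIntervalSyzygy_two_mul_add_one_eq_twoIntervalSyzygy_zero_iff hd₁ hd₂ hl₁ hn hd
  have hdvd := Nat.dvd_mul_iff_div_gcd_dvd (NeZero.ne n) (d₁ + d₂)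
  have hperiod_pos : 0 < n / n.gcd (d₁ + d₂) :=
    Nat.div_pos (Nat.gcd_le_left _ (NeZero.pos n)) (Nat.gcd_pos_of_pos_left _ (NeZero.pos n))
  refine Nat.isLeast_sInf_of_subset_of_exists_le ⟨_, Or.inl rfl⟩ ?_ fun m ⟨hm, hmI⟩ => ?_
  · rintro m (rfl | ⟨t, ⟨-, htk⟩, rfl⟩)
    · exact ⟨by omega, (heven _).2 ((hdvd _).2 dvd_rfl)⟩
    · exact ⟨Nat.succ_pos _, (hodd t).2 htk⟩
  obtain ⟨t, rfl | rfl⟩ := Nat.even_or_odd' m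
  · rw [heven, hdvd] at hmI
    exact ⟨_, Or.inl rfl, Nat.mul_le_mul_left 2 (Nat.le_of_dvd (by omega) hmI)⟩
  · rw [hodd] at hmI
    have ht : t ≠ 0 := by
      rintro rfl
      have : n ∣ l₁ := Nat.modEq_zero_iff_dvd.1 (by simpa using hmI.symm)
      exact absurd (Nat.le_of_dvd hl₁ this) (by omega)
    exact ⟨_, Or.inr ⟨t, ⟨Nat.pos_of_ne_zero ht, hmI⟩, rfl⟩, le_rfl⟩

/-- With `I` a disjoint union of two cyclic intervals of sizes
`d₁ ≠ d₂` separated by gaps of equal sizes `l₁ = l₂`, the minimal positive `m` with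
`I^m = I` is `min{2n/gcd(n,k), 2·min{t ≥ 1 : tk ≡ l₂ (mod n)} + 1}`, the second candidate
being omitted when no positive `t` satisfies `tk ≡ l₂ (mod n)`. -/
theorem twoIntervalSyzygy_period_of_ne_eq (n k d₁ l₁ d₂ l₂ : ℕ) [NeZero n]
    (hd₁ : 0 < d₁) (hd₂ : 0 < d₂) (hl₁ : 0 < l₁) (hl₂ : 0 < l₂)
    (hk : d₁ + d₂ = k) (hl : l₁ + l₂ = n - k) (hkn : k < n)
    (hd : d₁ ≠ d₂) (hleq : l₁ = l₂) :
    IsLeast {m : ℕ | 0 < m ∧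
        twoIntervalSyzygy n d₁ l₁ d₂ l₂ m = twoIntervalSyzygy n d₁ l₁ d₂ l₂ 0}
      (sInf ({2 * (n / Nat.gcd n k)} ∪
        (fun t => 2 * t + 1) '' {t : ℕ | 0 < t ∧ t * k ≡ l₂ [MOD n]})) :=
  twoIntervalSyzygy_period_of_ne_eq_general n k d₁ l₁ d₂ l₂ hd₁ hd₂ hl₁ hk hl hd hleq
end

section
/- With the setup of the two-interval syzygy sequence: if d_1 = d_2 and l_1 = l_2 (so n = 2(d_1 + l_1) and k = 2d_1), then the minimal positive integer m with I^m = I equals the minimum of the following four quantities (omitting any for which no t exists): 2n/gcd(n,k); 2·min{t ≥ 1 : tk ≡ l_2 (mod n)} + 1; 2·min{t ≥ 1 : d_1 + tk ≡ 0 (mod n)} + 1; 2·min{t ≥ 1 : d_1 + l_1 + tk ≡ 0 (mod n)}. -/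
set_option linter.unusedSectionVars false

namespace TwoIntervalAux

open Finset

def B (n d : ℕ) : Finset (ZMod n) := (Finset.Icc 1 d).image (fun a : ℕ => (a : ZMod n))

def U (n d l : ℕ) : Finset (ZMod n) :=
  B n d ∪ (Finset.Icc (d+l+1) (d+l+d)).image (fun a : ℕ => (a : ZMod n))

variable {n : ℕ} [NeZero n]

lemma Bs_eq (d l : ℕ) :
    (Finset.Icc (d+l+1) (d+l+d)).image (fun a : ℕ => (a : ZMod n)) =
      (B n d).image (· + ((d+l : ℕ) : ZMod n)) := by
  rw [show d+l+1 = 1+(d+l) by omega, show d+l+d = d+(d+l) by omega,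
    ← Finset.image_add_right_Icc, Finset.image_image, B, Finset.image_image]
  apply Finset.image_congr
  intro a _
  simp [Function.comp]

lemma U_eq (d l : ℕ) :
    U n d l = B n d ∪ (B n d).image (· + ((d+l:ℕ) : ZMod n)) := by
  rw [U, Bs_eq]

lemma U_shift_s (d l : ℕ) (hn : n = 2*(d+l)) :
    (U n d l).image (· + ((d+l:ℕ) : ZMod n)) = U n d l := by
  have hss : ((d+l:ℕ) : ZMod n) + ((d+l:ℕ) : ZMod n) = 0 := by
    rw [← Nat.cast_add, show (d+l)+(d+l) = n by omega, ZMod.natCast_self]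
  have h2 : ((B n d).image (· + ((d+l:ℕ):ZMod n))).image (· + ((d+l:ℕ):ZMod n)) = B n d := by
    rw [Finset.image_image]
    have he : ((· + ((d+l:ℕ):ZMod n)) ∘ (· + ((d+l:ℕ):ZMod n))) = (id : ZMod n → ZMod n) := by
      funext z
      simp only [Function.comp_apply, id_eq, add_assoc, hss, add_zero]
    rw [he, Finset.image_id]
  rw [U_eq, Finset.image_union, h2, Finset.union_comm]

lemma mem_U {d l : ℕ} (hl : 0 < l) (hn : n = 2*(d+l)) {z : ZMod n} :
    z ∈ U n d l ↔ (1 ≤ z.val ∧ z.val ≤ d) ∨ (d+l+1 ≤ z.val ∧ z.val ≤ d+l+d) := by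
  have hd0 : 0 ≤ d := Nat.zero_le d
  constructor
  · intro h
    rcases Finset.mem_union.1 h with h | h
    · obtain ⟨a, ha, rfl⟩ := Finset.mem_image.1 h
      rw [Finset.mem_Icc] at ha
      rw [ZMod.val_cast_of_lt (by omega)]
      omega
    · obtain ⟨a, ha, rfl⟩ := Finset.mem_image.1 h
      rw [Finset.mem_Icc] at ha
      rw [ZMod.val_cast_of_lt (by omega)]
      omega
  · intro h
    rcases h with h | h
    · exact Finset.mem_union_left _
        (Finset.mem_image.2 ⟨z.val, Finset.mem_Icc.2 h, ZMod.natCast_zmod_val z⟩)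
    · exact Finset.mem_union_right _
        (Finset.mem_image.2 ⟨z.val, Finset.mem_Icc.2 h, ZMod.natCast_zmod_val z⟩)

lemma U_shift_iff {d l : ℕ} (hd : 0 < d) (hl : 0 < l) (hn : n = 2*(d+l)) (c : ZMod n) :
    (U n d l).image (· + c) = U n d l ↔ c = 0 ∨ c = ((d+l:ℕ) : ZMod n) := by
  constructor
  · intro h
    have key : ∀ z : ZMod n, z ∈ U n d l ↔ z + c ∈ U n d l := by
      intro z
      constructor
      · intro hz; rw [← h]; exact Finset.mem_image_of_mem _ hz
      · intro hz; rw [← h] at hz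
        obtain ⟨w, hw, hwe⟩ := Finset.mem_image.1 hz
        have hwz : w = z := add_right_cancel hwe
        rwa [← hwz]
    have h1n : 1 < n := by omega
    have h1 : (1 : ZMod n) ∈ U n d l := by
      rw [mem_U hl hn]
      left
      have hv : (1 : ZMod n).val = 1 := by
        rw [← Nat.cast_one, ZMod.val_cast_of_lt h1n]
      omega
    have h0 : (0 : ZMod n) ∉ U n d l := by
      rw [mem_U hl hn, ZMod.val_zero]; omega
    have hz : (1 : ZMod n) + c ∈ U n d l := (key 1).1 h1
    have hc : c ∉ U n d l := fun hcmem => h0 ((key 0).2 (by rwa [zero_add]))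
    set z := (1 : ZMod n) + c with hzdef
    rw [mem_U hl hn] at hz
    have hzval1 : 1 ≤ z.val := by rcases hz with h'|h' <;> omega
    have hceq : c = ((z.val - 1 : ℕ) : ZMod n) := by
      have hh : ((z.val - 1 : ℕ) : ZMod n) + 1 = z := by
        have h1' : ((z.val - 1 : ℕ) : ZMod n) + 1 = ((z.val - 1 + 1 : ℕ) : ZMod n) := by
          push_cast; ring
        rw [h1', show z.val - 1 + 1 = z.val by omega, ZMod.natCast_zmod_val]
      have hc' : c = z - 1 := by rw [hzdef]; ring
      rw [hc']
      exact (eq_sub_of_add_eq hh).symm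
    rcases hz with h' | h'
    · left
      have hz1 : z.val = 1 := by
        by_contra hne
        apply hc
        rw [hceq, mem_U hl hn, ZMod.val_cast_of_lt (by omega)]
        left; omega
      rw [hceq, hz1]; simp
    · right
      have hz1 : z.val = d + l + 1 := by
        by_contra hne
        apply hc
        rw [hceq, mem_U hl hn, ZMod.val_cast_of_lt (by omega)]
        right; omega
      rw [hceq, hz1]
      norm_num
  · rintro (rfl | rfl)
    · simp
    · exact U_shift_s d l hn

lemma syzygy_even (n d l : ℕ) [NeZero n] (m : ℕ) (hm : m % 2 = 0) :
    twoIntervalSyzygy n d l d l m = (U n d l).image (· + ((m / 2 * (d + d) : ℕ) : ZMod n)) := by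
  simp only [twoIntervalSyzygy, hm, if_pos, U, B]

lemma syzygy_odd (n d l : ℕ) [NeZero n] (m : ℕ) (hm : m % 2 = 1) :
    twoIntervalSyzygy n d l d l m =
      (U n d l).image (· + (((m / 2 * (d + d) : ℕ) : ZMod n) - (l : ZMod n))) := by
  have hm' : ¬ (m % 2 = 0) := by omega
  simp only [twoIntervalSyzygy, if_neg hm']
  rw [U_eq, B]
  simp only [Finset.image_union, Finset.image_image]
  congr 1
  · apply Finset.image_congr
    intro a _
    simp only [Function.comp_apply]
    ring
  · rw [show d+1 = 1+d by omega,
      show Finset.Icc (1+d) (d+d) = (Finset.Icc 1 d).image (· + d) from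
        (Finset.image_add_right_Icc 1 d d).symm]
    simp only [Finset.image_image]
    apply Finset.image_congr
    intro a _
    simp only [Function.comp_apply]
    push_cast
    ring

lemma syzygy_zero (n d l : ℕ) [NeZero n] : twoIntervalSyzygy n d l d l 0 = U n d l := by
  rw [syzygy_even n d l 0 rfl]
  simp

lemma syzygy_eq_iff (n d l : ℕ) [NeZero n] (hd : 0 < d) (hl : 0 < l) (hn : n = 2*(d+l)) (m : ℕ) :
    (twoIntervalSyzygy n d l d l m = twoIntervalSyzygy n d l d l 0) ↔
      (m % 2 = 0 ∧ (n ∣ m/2*(d+d) ∨ d+l+m/2*(d+d) ≡ 0 [MOD n])) ∨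
      (m % 2 = 1 ∧ (m/2*(d+d) ≡ l [MOD n] ∨ d + m/2*(d+d) ≡ 0 [MOD n])) := by
  have hs2 : ((d+l : ℕ) : ZMod n) + ((d+l : ℕ) : ZMod n) = 0 := by
    rw [← Nat.cast_add, show (d+l)+(d+l) = n by omega, ZMod.natCast_self]
  push_cast at hs2
  rcases Nat.even_or_odd m with he | ho
  · have hm : m % 2 = 0 := Nat.even_iff.1 he
    rw [syzygy_zero, syzygy_even n d l m hm, U_shift_iff hd hl hn]
    have e1 : (((m/2*(d+d) : ℕ) : ZMod n) = 0) ↔ n ∣ m/2*(d+d) :=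
      ZMod.natCast_eq_zero_iff _ _
    have e2 : (((m/2*(d+d) : ℕ) : ZMod n) = ((d+l:ℕ) : ZMod n)) ↔
        d+l+m/2*(d+d) ≡ 0 [MOD n] := by
      rw [Nat.modEq_zero_iff_dvd, ← ZMod.natCast_eq_zero_iff]
      push_cast
      constructor
      · intro h; linear_combination h + hs2
      · intro h; linear_combination h - hs2
    constructor
    · rintro (h | h)
      · exact Or.inl ⟨hm, Or.inl (e1.1 h)⟩
      · exact Or.inl ⟨hm, Or.inr (e2.1 h)⟩
    · rintro (⟨_, h | h⟩ | ⟨h0, _⟩)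
      · exact Or.inl (e1.2 h)
      · exact Or.inr (e2.2 h)
      · omega
  · have hm : m % 2 = 1 := Nat.odd_iff.1 ho
    rw [syzygy_zero, syzygy_odd n d l m hm, U_shift_iff hd hl hn]
    have e1 : (((m/2*(d+d) : ℕ) : ZMod n) - (l:ZMod n) = 0) ↔ m/2*(d+d) ≡ l [MOD n] := by
      rw [sub_eq_zero, ZMod.natCast_eq_natCast_iff]
    have e2 : (((m/2*(d+d) : ℕ) : ZMod n) - (l:ZMod n) = ((d+l:ℕ) : ZMod n)) ↔
        d + m/2*(d+d) ≡ 0 [MOD n] := by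
      rw [Nat.modEq_zero_iff_dvd, ← ZMod.natCast_eq_zero_iff]
      push_cast
      constructor
      · intro h; linear_combination h + hs2
      · intro h; linear_combination h - hs2
    constructor
    · rintro (h | h)
      · exact Or.inr ⟨hm, Or.inl (e1.1 h)⟩
      · exact Or.inr ⟨hm, Or.inr (e2.1 h)⟩
    · rintro (⟨h0, _⟩ | ⟨_, h | h⟩)
      · omega
      · exact Or.inl (e1.2 h)
      · exact Or.inr (e2.2 h)

end TwoIntervalAux

open TwoIntervalAux


/-- With `I` a disjoint union of two cyclic intervals of equal sizes
`d₁ = d₂` separated by gaps of equal sizes `l₁ = l₂`, the minimal positive `m` with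
`I^m = I` is the minimum of the four quantities `2n/gcd(n,k)`,
`2·min{t ≥ 1 : tk ≡ l₂ (mod n)} + 1`, `2·min{t ≥ 1 : d₁ + tk ≡ 0 (mod n)} + 1` and
`2·min{t ≥ 1 : d₁ + l₁ + tk ≡ 0 (mod n)}` (omitting any for which no such `t` exists). -/
theorem twoIntervalSyzygy_period_of_eq_eq (n k d₁ l₁ d₂ l₂ : ℕ) [NeZero n]
    (hd₁ : 0 < d₁) (hd₂ : 0 < d₂) (hl₁ : 0 < l₁) (hl₂ : 0 < l₂)
    (hk : d₁ + d₂ = k) (hl : l₁ + l₂ = n - k) (hkn : k < n)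
    (hd : d₁ = d₂) (hleq : l₁ = l₂) :
    IsLeast {m : ℕ | 0 < m ∧
        twoIntervalSyzygy n d₁ l₁ d₂ l₂ m = twoIntervalSyzygy n d₁ l₁ d₂ l₂ 0}
      (sInf ({2 * (n / Nat.gcd n k)} ∪
        (fun t => 2 * t + 1) '' {t : ℕ | 0 < t ∧ t * k ≡ l₂ [MOD n]} ∪
        (fun t => 2 * t + 1) '' {t : ℕ | 0 < t ∧ d₁ + t * k ≡ 0 [MOD n]} ∪
        (fun t => 2 * t) '' {t : ℕ | 0 < t ∧ d₁ + l₁ + t * k ≡ 0 [MOD n]})) := by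
  subst hd hleq hk
  set d := d₁ with hdd
  set l := l₁ with hll
  have hn : n = 2*(d+l) := by omega
  have hnpos : 0 < n := Nat.pos_of_ne_zero (NeZero.ne n)
  set g := Nat.gcd n (d+d) with hgdef
  have hg0 : 0 < g := Nat.gcd_pos_of_pos_left _ hnpos
  have hgn : g ∣ n := Nat.gcd_dvd_left n (d+d)
  have hgk : g ∣ d+d := Nat.gcd_dvd_right n (d+d)
  have hng1 : 1 ≤ n / g := Nat.div_pos (Nat.le_of_dvd hnpos hgn) hg0
  have hdvd : n ∣ n / g * (d+d) := by
    obtain ⟨a, ha⟩ := hgk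
    obtain ⟨b, hb⟩ := hgn
    have hngb : n / g = b := by rw [hb, Nat.mul_div_cancel_left _ hg0]
    exact ⟨a, by rw [hngb, ha, hb]; ring⟩
  have hmin : ∀ t : ℕ, 0 < t → n ∣ t*(d+d) → n/g ≤ t := by
    intro t ht hdv
    have hco : Nat.Coprime (n/g) ((d+d)/g) := Nat.coprime_div_gcd_div_gcd hg0
    have h1 : n/g * g ∣ t * ((d+d)/g) * g := by
      rw [Nat.div_mul_cancel hgn, mul_assoc, Nat.div_mul_cancel hgk]
      exact hdv
    have h2 : n/g ∣ t * ((d+d)/g) := (Nat.mul_dvd_mul_iff_right hg0).mp h1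
    exact Nat.le_of_dvd ht (hco.dvd_of_dvd_mul_right h2)
  -- the set S
  set S : Set ℕ := ({2 * (n / g)} ∪
        (fun t => 2 * t + 1) '' {t : ℕ | 0 < t ∧ t * (d+d) ≡ l [MOD n]} ∪
        (fun t => 2 * t + 1) '' {t : ℕ | 0 < t ∧ d + t * (d+d) ≡ 0 [MOD n]} ∪
        (fun t => 2 * t) '' {t : ℕ | 0 < t ∧ d + l + t * (d+d) ≡ 0 [MOD n]}) with hSdef
  have hSmem : ∀ x : ℕ, x ∈ S ↔ (((x = 2*(n/g) ∨
      (∃ t, (0 < t ∧ t*(d+d) ≡ l [MOD n]) ∧ 2*t+1 = x)) ∨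
      (∃ t, (0 < t ∧ d + t*(d+d) ≡ 0 [MOD n]) ∧ 2*t+1 = x)) ∨
      (∃ t, (0 < t ∧ d + l + t*(d+d) ≡ 0 [MOD n]) ∧ 2*t = x)) := by
    intro x
    simp only [hSdef, Set.mem_union, Set.mem_singleton_iff, Set.mem_image, Set.mem_setOf_eq]
  have hSne : 2 * (n / g) ∈ S := (hSmem _).mpr (Or.inl (Or.inl (Or.inl rfl)))
  -- every element of S is a period
  have hSP : ∀ x ∈ S, 0 < x ∧
      twoIntervalSyzygy n d l d l x = twoIntervalSyzygy n d l d l 0 := by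
    intro x hx
    rcases (hSmem x).mp hx with ((rfl | ⟨t, ⟨ht, hmod⟩, rfl⟩) | ⟨t, ⟨ht, hmod⟩, rfl⟩) |
      ⟨t, ⟨ht, hmod⟩, rfl⟩
    · refine ⟨by omega, (syzygy_eq_iff n d l hd₁ hl₁ hn _).mpr (Or.inl ⟨by omega, Or.inl ?_⟩)⟩
      rw [show 2*(n/g)/2 = n/g by omega]
      exact hdvd
    · refine ⟨by omega, (syzygy_eq_iff n d l hd₁ hl₁ hn _).mpr (Or.inr ⟨by omega, Or.inl ?_⟩)⟩
      rw [show (2*t+1)/2 = t by omega]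
      exact hmod
    · refine ⟨by omega, (syzygy_eq_iff n d l hd₁ hl₁ hn _).mpr (Or.inr ⟨by omega, Or.inr ?_⟩)⟩
      rw [show (2*t+1)/2 = t by omega]
      exact hmod
    · refine ⟨by omega, (syzygy_eq_iff n d l hd₁ hl₁ hn _).mpr (Or.inl ⟨by omega, Or.inr ?_⟩)⟩
      rw [show (2*t)/2 = t by omega]
      exact hmod
  constructor
  · exact hSP _ (Nat.sInf_mem ⟨_, hSne⟩)
  · rintro m ⟨hm0, hmeq⟩
    have hcond := (syzygy_eq_iff n d l hd₁ hl₁ hn m).mp hmeq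
    have hln : l < n := by omega
    have hdn : d < n := by omega
    rcases hcond with ⟨hpar, hdv | hmod⟩ | ⟨hpar, hmod | hmod⟩
    · -- n ∣ (m/2)*(d+d)
      have ht1 : 0 < m / 2 := by omega
      have hle : n/g ≤ m/2 := hmin _ ht1 hdv
      calc sInf S ≤ 2*(n/g) := Nat.sInf_le hSne
        _ ≤ m := by omega
    · -- d + l + (m/2)*(d+d) ≡ 0
      have ht1 : 0 < m / 2 := by omega
      have hmem : m ∈ S := (hSmem m).mpr (Or.inr ⟨m/2, ⟨ht1, hmod⟩, by omega⟩)
      exact Nat.sInf_le hmem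
    · -- (m/2)*(d+d) ≡ l
      have ht1 : 0 < m / 2 := by
        rcases Nat.eq_zero_or_pos (m/2) with h0 | h
        · exfalso
          rw [h0, zero_mul] at hmod
          have : n ∣ l := Nat.modEq_zero_iff_dvd.mp hmod.symm
          have := Nat.le_of_dvd hl₁ this
          omega
        · exact h
      have hmem : m ∈ S := (hSmem m).mpr (Or.inl (Or.inl (Or.inr ⟨m/2, ⟨ht1, hmod⟩, by omega⟩)))
      exact Nat.sInf_le hmem
    · -- d + (m/2)*(d+d) ≡ 0
      have ht1 : 0 < m / 2 := by
        rcases Nat.eq_zero_or_pos (m/2) with h0 | h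
        · exfalso
          rw [h0, zero_mul, add_zero] at hmod
          have : n ∣ d := Nat.modEq_zero_iff_dvd.mp hmod
          have := Nat.le_of_dvd hd₁ this
          omega
        · exact h
      have hmem : m ∈ S := (hSmem m).mpr (Or.inl (Or.inr ⟨m/2, ⟨ht1, hmod⟩, by omega⟩))
      exact Nat.sInf_le hmem
end

section
/- Let n > k > 0 and let I ⊆ Z/nZ be a k-subset which is a disjoint union of r+1 ≥ 3 cyclic intervals of sizes d_1, ..., d_{r+1} separated by gaps of sizes l_1, ..., l_{r+1} (indices cyclic, Σd_i = k, Σl_i = n-k, all ≥ 1). Define I^{2t} = I + tk (mod n). Then the minimal positive integer t with I^{2t} = I is t = min{ t ≥ 1 : ∃ c ∈ {1,...,r+1} such that d_{c+i} = d_{1+i} and l_{c+i} = l_{1+i} for all i = 0,...,r (indices mod r+1), and tk ≡ Σ_{i=1}^{c-1}(d_i + l_i) (mod n) }; moreover this minimum is at most n/gcd(n,k), so the period 2t of the rank-1 module L_I is bounded by 2n/gcd(n,k). -/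
/-- Let `I ⊆ ℤ/nℤ` be a `k`-subset which is a disjoint union of
`r+1 ≥ 3` maximal cyclic intervals (blocks) of sizes `d₀, …, d_r` separated by gaps of
sizes `l₀, …, l_r` (indices cyclic modulo `r+1`, `Σ dᵢ = k`, `Σ lᵢ = n-k`, all positive),
normalized so that the first block starts at `1`.  Writing `I^{2t} = I + tk (mod n)`, the
minimal positive `t` with `I^{2t} = I` is the least `t ≥ 1` for which there exists a
cyclic shift `c` with `d_{c+i} = d_i` and `l_{c+i} = l_i` for all `i`, and
`tk ≡ Σ_{j<c} (d_j + l_j) (mod n)`; moreover this minimum is at most `n / gcd(n,k)`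
(so the period `2t` of `L_I` is bounded by `2n/gcd(n,k)`). -/
theorem translate_period_of_many_blocks (n k r : ℕ) [NeZero n] (hr : 2 ≤ r)
    (d l : ℕ → ℕ)
    (hd : ∀ i, 0 < d i) (hl : ∀ i, 0 < l i)
    (hdper : ∀ i, d (i + (r + 1)) = d i) (hlper : ∀ i, l (i + (r + 1)) = l i)
    (hsumd : ∑ i ∈ Finset.range (r + 1), d i = k)
    (hsuml : ∑ i ∈ Finset.range (r + 1), l i = n - k)
    (hk : 0 < k) (hkn : k < n)
    (I : Finset (ZMod n))
    (hI : I = (Finset.range (r + 1)).biUnion (fun i =>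
      (Finset.Ico (1 + ∑ j ∈ Finset.range i, (d j + l j))
          (1 + (∑ j ∈ Finset.range i, (d j + l j)) + d i)).image
        (fun a : ℕ => (a : ZMod n)))) :
    IsLeast {t : ℕ | 0 < t ∧ I.image (fun a => a + ((t * k : ℕ) : ZMod n)) = I}
      (sInf {t : ℕ | 0 < t ∧ ∃ c ≤ r,
        (∀ i ≤ r, d (c + i) = d i ∧ l (c + i) = l i) ∧
        t * k ≡ (∑ j ∈ Finset.range c, (d j + l j)) [MOD n]}) ∧
    sInf {t : ℕ | 0 < t ∧ ∃ c ≤ r,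
        (∀ i ≤ r, d (c + i) = d i ∧ l (c + i) = l i) ∧
        t * k ≡ (∑ j ∈ Finset.range c, (d j + l j)) [MOD n]} ≤ n / Nat.gcd n k := by
  have hn : 0 < n := by omega
  set s : ℕ → ℕ := fun i => ∑ j ∈ Finset.range i, (d j + l j) with hs_def
  have hseq : ∀ i, ∑ j ∈ Finset.range i, (d j + l j) = s i := fun i => rfl
  -- basic facts about s
  have hs_succ : ∀ i, s (i + 1) = s i + d i + l i := by
    intro i; simp only [hs_def, Finset.sum_range_succ]; ring
  have hsr1 : s (r + 1) = n := by
    simp only [hs_def]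
    rw [Finset.sum_add_distrib, hsumd, hsuml]; omega
  have hdq : ∀ q i, d (i + q * (r + 1)) = d i := by
    intro q
    induction q with
    | zero => simp
    | succ q ih =>
      intro i
      have e : i + (q + 1) * (r + 1) = i + q * (r + 1) + (r + 1) := by ring
      rw [e, hdper, ih]
  have hlq : ∀ q i, l (i + q * (r + 1)) = l i := by
    intro q
    induction q with
    | zero => simp
    | succ q ih =>
      intro i
      have e : i + (q + 1) * (r + 1) = i + q * (r + 1) + (r + 1) := by ring
      rw [e, hlper, ih]
  have hs1 : ∀ i, s (i + (r + 1)) = s i + n := by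
    intro i
    have e : i + (r + 1) = (r + 1) + i := by ring
    rw [e]
    simp only [hs_def]
    rw [Finset.sum_range_add]
    have e2 : ∀ j ∈ Finset.range i, (d (r + 1 + j) + l (r + 1 + j)) = d j + l j := by
      intro j _
      have e3 : r + 1 + j = j + (r + 1) := by ring
      rw [e3, hdper, hlper]
    rw [Finset.sum_congr rfl e2]
    have := hsr1
    simp only [hs_def] at this
    omega
  have hsq : ∀ q i, s (i + q * (r + 1)) = s i + q * n := by
    intro q
    induction q with
    | zero => simp
    | succ q ih =>
      intro i
      have e : i + (q + 1) * (r + 1) = i + q * (r + 1) + (r + 1) := by ring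
      rw [e, hs1, ih]; ring
  have hmodle : ∀ i, i % (r + 1) ≤ r := by
    intro i
    have := Nat.mod_lt i (show 0 < r + 1 by omega)
    omega
  have hdmod : ∀ i, d i = d (i % (r + 1)) := by
    intro i
    conv_lhs => rw [← Nat.mod_add_div' i (r + 1)]
    rw [hdq]
  have hlmod : ∀ i, l i = l (i % (r + 1)) := by
    intro i
    conv_lhs => rw [← Nat.mod_add_div' i (r + 1)]
    rw [hlq]
  have hsmod : ∀ i, s i = s (i % (r + 1)) + (i / (r + 1)) * n := by
    intro i
    conv_lhs => rw [← Nat.mod_add_div' i (r + 1)]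
    rw [hsq]
  have hmono : Monotone s := fun a b hab =>
    Finset.sum_le_sum_of_subset (Finset.range_subset_range.mpr hab)
  have hblockin : ∀ i ≤ r, s i + d i + l i ≤ n := by
    intro i hi
    have h1 : s (i + 1) ≤ s (r + 1) := hmono (by omega)
    have := hs_succ i
    omega
  -- casting is injective on [1, n]
  have hcast : ∀ a b : ℕ, 1 ≤ a → a ≤ n → 1 ≤ b → b ≤ n →
      ((a : ZMod n) = (b : ZMod n)) → a = b := by
    intro a b ha han hb hbn h
    have h2 : a % n = b % n := (ZMod.natCast_eq_natCast_iff' a b n).mp h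
    by_cases h3 : a = n
    · subst h3
      rw [Nat.mod_self] at h2
      by_cases h4 : b = a
      · omega
      · have : b % a = b := Nat.mod_eq_of_lt (by omega)
        omega
    · have ha' : a % n = a := Nat.mod_eq_of_lt (by omega)
      by_cases h4 : b = n
      · subst h4; rw [Nat.mod_self] at h2; omega
      · have : b % n = b := Nat.mod_eq_of_lt (by omega)
        omega
  -- membership characterization in the window [1, n]
  have hmem : ∀ a : ℕ, 1 ≤ a → a ≤ n →
      (((a : ZMod n) ∈ I) ↔ ∃ i ≤ r, 1 + s i ≤ a ∧ a < 1 + s i + d i) := by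
    intro a ha han
    rw [hI]
    simp only [Finset.mem_biUnion, Finset.mem_image, Finset.mem_Ico, Finset.mem_range, hseq]
    constructor
    · rintro ⟨i, hi, b, ⟨hb1, hb2⟩, hb3⟩
      have hir : i ≤ r := by omega
      have hbl := hblockin i hir
      have hli := hl i
      have hbn : b ≤ n := by omega
      have hb1' : 1 ≤ b := by omega
      have hab : a = b := hcast a b ha han hb1' hbn hb3.symm
      exact ⟨i, hir, by omega, by omega⟩
    · rintro ⟨i, hir, h1, h2⟩
      exact ⟨i, by omega, a, ⟨by omega, by omega⟩, rfl⟩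
  -- the key structural characterization
  have hchar : ∀ i j, j ≤ d i + l i →
      ((((1 + s i + j : ℕ) : ZMod n) ∈ I) ↔ (j < d i ∨ j = d i + l i)) := by
    intro i j hj
    have h0r : i % (r + 1) ≤ r := hmodle i
    have hde : d i = d (i % (r + 1)) := hdmod i
    have hle : l i = l (i % (r + 1)) := hlmod i
    have hse : s i = s (i % (r + 1)) + (i / (r + 1)) * n := hsmod i
    set i₀ := i % (r + 1) with hi0
    have hcasteq : ((1 + s i + j : ℕ) : ZMod n) = ((1 + s i₀ + j : ℕ) : ZMod n) := by
      rw [hse]; push_cast [ZMod.natCast_self]; ring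
    rw [hcasteq, hde, hle]
    rw [hde, hle] at hj
    rcases eq_or_lt_of_le hj with heq | hlt
    · -- j is exactly the start of the next block
      have e : 1 + s i₀ + j = 1 + s (i₀ + 1) := by rw [hs_succ]; omega
      rw [e]
      have hmem' : ((1 + s (i₀ + 1) : ℕ) : ZMod n) ∈ I := by
        by_cases hir : i₀ = r
        · have e2 : 1 + s (i₀ + 1) = 1 + n := by rw [hir, hsr1]
          rw [e2]
          have e3 : ((1 + n : ℕ) : ZMod n) = ((1 : ℕ) : ZMod n) := by
            push_cast [ZMod.natCast_self]; ring
          rw [e3]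
          rw [hmem 1 le_rfl hn]
          refine ⟨0, by omega, ?_, ?_⟩
          · have : s 0 = 0 := by simp [hs_def]
            omega
          · have h0 : s 0 = 0 := by simp [hs_def]
            have := hd 0
            omega
        · have hir' : i₀ + 1 ≤ r := by omega
          have hbl := hblockin (i₀ + 1) hir'
          have := hd (i₀ + 1)
          have := hl (i₀ + 1)
          rw [hmem (1 + s (i₀ + 1)) (by omega) (by omega)]
          exact ⟨i₀ + 1, hir', by omega, by omega⟩
      have : ¬ (j < d i₀) := by have := hl i₀; omega
      tauto
    · -- j is strictly inside block + gap
      have hbl := hblockin i₀ h0r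
      have han : 1 + s i₀ + j ≤ n := by omega
      rw [hmem (1 + s i₀ + j) (by omega) han]
      constructor
      · rintro ⟨m, hm, h1, h2⟩
        left
        by_contra hge
        push_neg at hge
        rcases le_or_gt m i₀ with hmi | hmi
        · have hsd : s m + d m ≤ s i₀ + d i₀ := by
            rcases eq_or_lt_of_le hmi with rfl | hmi'
            · omega
            · have h3 : s (m + 1) ≤ s i₀ := hmono (by omega)
              have := hs_succ m
              have := hl m
              omega
          omega
        · have h3 : s (i₀ + 1) ≤ s m := hmono (by omega)
          have := hs_succ i₀
          omega
      · rintro (hjd | habs)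
        · exact ⟨i₀, h0r, by omega, by omega⟩
        · omega
  -- block start extraction
  have hstart : ∀ y : ZMod n, y ∈ I → (y - 1) ∉ I →
      ∃ c ≤ r, y = ((1 + s c : ℕ) : ZMod n) := by
    intro y hy hy1
    rw [hI] at hy
    simp only [Finset.mem_biUnion, Finset.mem_image, Finset.mem_Ico, Finset.mem_range, hseq] at hy
    obtain ⟨m, hm, b, ⟨hb1, hb2⟩, rfl⟩ := hy
    have hmr : m ≤ r := by omega
    by_cases hb : b = 1 + s m
    · exact ⟨m, hmr, by rw [hb]⟩
    · exfalso
      apply hy1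
      have hb1' : 1 ≤ b := by omega
      have e : ((b : ℕ) : ZMod n) - 1 = ((b - 1 : ℕ) : ZMod n) := by
        rw [Nat.cast_sub hb1']; push_cast; ring
      rw [e, hI]
      simp only [Finset.mem_biUnion, Finset.mem_image, Finset.mem_Ico, Finset.mem_range, hseq]
      exact ⟨m, hm, b - 1, ⟨by omega, by omega⟩, rfl⟩
  -- extend a cyclic symmetry to all indices, and additivity of s
  have hsymext : ∀ c, (∀ i ≤ r, d (c + i) = d i ∧ l (c + i) = l i) →
      ∀ i, d (c + i) = d i ∧ l (c + i) = l i := by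
    intro c hsym i
    have e : c + i = c + i % (r + 1) + (i / (r + 1)) * (r + 1) := by
      conv_lhs => rw [← Nat.mod_add_div' i (r + 1)]
      ring
    rw [e, hdq, hlq]
    have h1 := hsym (i % (r + 1)) (hmodle i)
    rw [h1.1, h1.2, ← hdmod, ← hlmod]
    exact ⟨rfl, rfl⟩
  have hsadd : ∀ c, (∀ i, d (c + i) = d i ∧ l (c + i) = l i) →
      ∀ i, s (c + i) = s c + s i := by
    intro c hsym i
    simp only [hs_def]
    rw [Finset.sum_range_add]
    congr 1
    exact Finset.sum_congr rfl fun j _ => by rw [(hsym j).1, (hsym j).2]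
  -- Direction B : symmetry implies translation invariance
  have hB : ∀ t c, c ≤ r → (∀ i ≤ r, d (c + i) = d i ∧ l (c + i) = l i) →
      t * k ≡ s c [MOD n] →
      I.image (fun a => a + ((t * k : ℕ) : ZMod n)) = I := by
    intro t c hc hsym hmod
    have hsymall := hsymext c hsym
    have hsc := hsadd c hsymall
    have hX : ((t * k : ℕ) : ZMod n) = ((s c : ℕ) : ZMod n) :=
      (ZMod.natCast_eq_natCast_iff _ _ _).mpr hmod
    apply Finset.eq_of_subset_of_card_le
    · intro x hx
      simp only [Finset.mem_image] at hx
      obtain ⟨y, hy, rfl⟩ := hx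
      rw [hI] at hy
      simp only [Finset.mem_biUnion, Finset.mem_image, Finset.mem_Ico, Finset.mem_range, hseq] at hy
      obtain ⟨m, hm, b, ⟨hb1, hb2⟩, rfl⟩ := hy
      have hjd : b - (1 + s m) < d m := by omega
      have hdm := (hsymall m).1
      have hlm := hl (c + m)
      have e : ((b : ℕ) : ZMod n) + ((t * k : ℕ) : ZMod n)
          = ((1 + s (c + m) + (b - (1 + s m)) : ℕ) : ZMod n) := by
        rw [hX, hsc m]
        have e2 : 1 + (s c + s m) + (b - (1 + s m)) = b + s c := by omega
        rw [e2]; push_cast; ring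
      rw [e]
      exact (hchar (c + m) (b - (1 + s m)) (by omega)).mpr (Or.inl (by omega))
    · exact le_of_eq (Finset.card_image_of_injective I (add_left_injective _)).symm
  -- Direction C : translation invariance implies symmetry
  have hC : ∀ t, 0 < t → I.image (fun a => a + ((t * k : ℕ) : ZMod n)) = I →
      (0 < t ∧ ∃ c ≤ r, (∀ i ≤ r, d (c + i) = d i ∧ l (c + i) = l i) ∧
        t * k ≡ s c [MOD n]) := by
    intro t ht hinv
    set X := ((t * k : ℕ) : ZMod n) with hXdef
    have hmemiff : ∀ a : ZMod n, a + X ∈ I ↔ a ∈ I := by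
      intro a
      constructor
      · intro h
        rw [← hinv] at h
        simp only [Finset.mem_image] at h
        obtain ⟨b, hb, hba⟩ := h
        have : b = a := by exact add_right_cancel hba
        rwa [← this]
      · intro h
        rw [← hinv]
        exact Finset.mem_image_of_mem _ h
    have h1I : (1 : ZMod n) ∈ I := by
      have h0 := (hchar 0 0 (by omega)).mpr (Or.inl (hd 0))
      have e : s 0 = 0 := by simp [hs_def]
      rw [e] at h0
      simpa using h0
    have h0I : (0 : ZMod n) ∉ I := by
      have hlr := hl r
      have h0 := hchar r (d r + (l r - 1)) (by omega)
      have hcastn : ((1 + s r + (d r + (l r - 1)) : ℕ) : ZMod n) = 0 := by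
        have e : 1 + s r + (d r + (l r - 1)) = n := by
          have := hs_succ r
          have := hsr1
          omega
        rw [e, ZMod.natCast_self]
      rw [hcastn] at h0
      intro hc0
      have := h0.mp hc0
      omega
    have hXI : X ∉ I := by
      intro h
      exact h0I ((hmemiff 0).mp (by rwa [zero_add]))
    have h1X : (1 : ZMod n) + X ∈ I := (hmemiff 1).mpr h1I
    obtain ⟨c, hcr, hcx⟩ := hstart (1 + X) h1X (by rwa [add_sub_cancel_left])
    have hXc : X = ((s c : ℕ) : ZMod n) := by
      have e : ((1 + s c : ℕ) : ZMod n) = 1 + ((s c : ℕ) : ZMod n) := by push_cast; ring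
      rw [e] at hcx
      exact add_left_cancel hcx
    have hmod : t * k ≡ s c [MOD n] :=
      (ZMod.natCast_eq_natCast_iff _ _ _).mp (hXdef ▸ hXc)
    have hP : ∀ i, d (c + i) = d i ∧ l (c + i) = l i := by
      intro i
      induction i using Nat.strong_induction_on with
      | _ i IH =>
        have hsci : s (c + i) = s c + s i := by
          simp only [hs_def]
          rw [Finset.sum_range_add]
          congr 1
          refine Finset.sum_congr rfl fun j hj => ?_
          have hji := IH j (Finset.mem_range.mp hj)
          rw [hji.1, hji.2]
        have key : ∀ j, j ≤ d (c + i) + l (c + i) → j ≤ d i + l i →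
            ((j < d (c + i) ∨ j = d (c + i) + l (c + i)) ↔ (j < d i ∨ j = d i + l i)) := by
          intro j hj1 hj2
          have e1 := hchar (c + i) j hj1
          have e2 := hchar i j hj2
          have ecast : ((1 + s (c + i) + j : ℕ) : ZMod n)
              = ((1 + s i + j : ℕ) : ZMod n) + X := by
            rw [hXc, hsci]; push_cast; ring
          rw [ecast, hmemiff] at e1
          exact e1.symm.trans e2
        have hl1 := hl (c + i)
        have hl2 := hl i
        have hdi : d (c + i) = d i := by
          rcases lt_trichotomy (d (c + i)) (d i) with h | h | h
          · have hk' := key (d (c + i)) (by omega) (by omega)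
            omega
          · exact h
          · have hk' := key (d i) (by omega) (by omega)
            omega
        have hli : l (c + i) = l i := by
          rcases lt_trichotomy (l (c + i)) (l i) with h | h | h
          · have hk' := key (d i + l (c + i)) (by omega) (by omega)
            omega
          · exact h
          · have hk' := key (d i + l i) (by omega) (by omega)
            omega
        exact ⟨hdi, hli⟩
    exact ⟨ht, c, hcr, fun i _ => hP i, hmod⟩
  -- the trivial bound element
  have hg : 0 < Nat.gcd n k := Nat.gcd_pos_of_pos_left k hn
  have ht0pos : 0 < n / Nat.gcd n k :=
    Nat.div_pos (Nat.le_of_dvd hn (Nat.gcd_dvd_left n k)) hg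
  have hT0 : (n / Nat.gcd n k) ∈ {t : ℕ | 0 < t ∧ ∃ c ≤ r,
      (∀ i ≤ r, d (c + i) = d i ∧ l (c + i) = l i) ∧
      t * k ≡ (∑ j ∈ Finset.range c, (d j + l j)) [MOD n]} := by
    refine ⟨ht0pos, 0, by omega, fun i _ => by simp, ?_⟩
    rw [Finset.sum_range_zero]
    rw [Nat.modEq_zero_iff_dvd]
    obtain ⟨k', hk'⟩ := Nat.gcd_dvd_right n k
    refine ⟨k', ?_⟩
    calc n / Nat.gcd n k * k = n / Nat.gcd n k * (Nat.gcd n k * k') := by rw [← hk']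
      _ = (n / Nat.gcd n k * Nat.gcd n k) * k' := by ring
      _ = n * k' := by rw [Nat.div_mul_cancel (Nat.gcd_dvd_left n k)]
  have hne : {t : ℕ | 0 < t ∧ ∃ c ≤ r,
      (∀ i ≤ r, d (c + i) = d i ∧ l (c + i) = l i) ∧
      t * k ≡ (∑ j ∈ Finset.range c, (d j + l j)) [MOD n]}.Nonempty := ⟨_, hT0⟩
  have hmem2 := Nat.sInf_mem hne
  refine ⟨⟨?_, ?_⟩, Nat.sInf_le hT0⟩
  · obtain ⟨ht, c, hc, hsym, hmod⟩ := hmem2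
    exact ⟨ht, hB _ c hc hsym hmod⟩
  · rintro t ⟨ht, hinv⟩
    exact Nat.sInf_le (hC t ht hinv)
end
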